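/- arXiv:1810.04004 — 7 statements merged into one kernel-verified Lean document; each statement's English description precedes it below -/
import Mathlib

section
/- For integers 3 ≤ n ≤ m, the strong geodetic number of the complete bipartite graph K_{n,m} equals the minimum over integers k with 0 ≤ k ≤ n of s(k) = max{F(k), G(k)}, i.e. sg(K_{n,m}) = min{ max{k + f(k), k + g(k)} : 0 ≤ k ≤ n, k ∈ ℤ }. -/
/-!
`K_{n,m}` has diameter two, so a vertex outside a strong geodetic set `S` can only be covered as
the middle vertex of the geodesic between two vertices of `S` on the opposite side, and each such
pair covers one vertex. Writing `A`, `B` for the two sides of `S`, this gives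
`n - |A| ≤ C(|B|, 2)` and `m - |B| ≤ C(|A|, 2)`; conversely, under these inequalities the middle
vertices can be assigned to the pairs freely, so `A ∪ B` is a strong geodetic set. For `|A| = k`
the least admissible `|B|` is `max (f k) (g k)`.
-/

open SimpleGraph

/-- A set `S` of vertices is a strong geodetic set of `G` if one can fix, for each
pair of vertices of `S`, a single geodesic (shortest path) between them, so that
every vertex of the graph lies on one of the chosen geodesics. -/
def IsStrongGeodeticSet {V : Type*} (G : SimpleGraph V) (S : Set V) : Prop :=
  ∃ γ : ∀ u ∈ S, ∀ v ∈ S, G.Walk u v,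
    (∀ u (hu : u ∈ S) v (hv : v ∈ S), (γ u hu v hv).length = G.dist u v) ∧
    (∀ u (hu : u ∈ S) v (hv : v ∈ S), γ u hu v hv = (γ v hv u hu).reverse) ∧
    (∀ x : V, ∃ u, ∃ hu : u ∈ S, ∃ v, ∃ hv : v ∈ S, x ∈ (γ u hu v hv).support)

/-- The strong geodetic number of a finite graph: the minimum cardinality of a
strong geodetic set. -/
noncomputable def strongGeodeticNumber {V : Type*} [Fintype V] (G : SimpleGraph V) : ℕ :=
  sInf {k | ∃ S : Finset V, S.card = k ∧ IsStrongGeodeticSet G ↑S}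

/-- `fFun n p = min {q : binom(q,2) ≥ n - p}`. -/
noncomputable def fFun (n : ℕ) (p : ℕ) : ℕ := sInf {q : ℕ | n - p ≤ q.choose 2}

/-- `gFun m p = m - binom(p,2)` (as an integer). -/
def gFun (m : ℕ) (p : ℕ) : ℤ := (m : ℤ) - (p.choose 2 : ℤ)

open Finset Sum

namespace Finset

variable {β γ : Type*} [DecidableEq β] [DecidableEq γ]

theorem card_le_choose_two_of_subset_image_offDiag {T : Finset γ} {B : Finset β}
    {mid : β → β → γ} (hmid : ∀ u ∈ B, ∀ v ∈ B, u ≠ v → mid u v = mid v u)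
    (hT : T ⊆ B.offDiag.image fun p => mid p.1 p.2) : #T ≤ (#B).choose 2 := by
  rw [← Sym2.card_image_offDiag]
  refine card_le_card_of_forall_subsingleton
    (fun x z => ∃ p ∈ B.offDiag, s(p.1, p.2) = z ∧ mid p.1 p.2 = x) (fun x hx => ?_) ?_
  · obtain ⟨p, hp, rfl⟩ := mem_image.1 (hT hx)
    exact ⟨s(p.1, p.2), mem_image_of_mem _ hp, p, hp, rfl, rfl⟩
  · rintro z - x ⟨-, p, hp, rfl, rfl⟩ y ⟨-, p', hp', hpp', rfl⟩
    rw [mem_offDiag] at hp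
    rcases Sym2.eq_iff.1 hpp' with ⟨h1, h2⟩ | ⟨h1, h2⟩
    · rw [h1, h2]
    · rw [h1, h2]
      exact hmid _ hp.1 _ hp.2.1 hp.2.2

theorem exists_subset_image_offDiag_of_card_le_choose_two [Nonempty γ] {T : Finset γ}
    {B : Finset β} (h : #T ≤ (#B).choose 2) :
    ∃ mid : β → β → γ, (∀ u v, mid u v = mid v u) ∧
      T ⊆ B.offDiag.image fun p => mid p.1 p.2 := by
  set P := B.offDiag.image (Function.uncurry Sym2.mk)
  obtain ⟨e⟩ : Nonempty (T ↪ P) :=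
    Function.Embedding.nonempty_of_card_le (by simpa [P, Sym2.card_image_offDiag] using h)
  -- `f` inverts the injection `e` of `T` into the unordered pairs of distinct elements of `B`
  let f : Sym2 β → γ :=
    Function.extend (fun x : T => (e x : Sym2 β)) (↑) fun _ => Classical.arbitrary γ
  refine ⟨fun u v => f s(u, v), fun u v => congrArg f Sym2.eq_swap, fun x hx => ?_⟩
  obtain ⟨p, hp, hpx⟩ := mem_image.1 (e ⟨x, hx⟩).2
  refine mem_image.2 ⟨p, hp, ?_⟩
  change f (Function.uncurry Sym2.mk p) = x
  rw [hpx]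
  exact (Subtype.val_injective.comp e.injective).extend_apply _ _ ⟨x, hx⟩

end Finset

theorem SimpleGraph.Walk.cons_toWalk_eq_reverse {V : Type*} {G : SimpleGraph V}
    {u v w w' : V} (hw : w = w') (hu : G.Adj u w) (hv : G.Adj w v) (hv' : G.Adj v w')
    (hu' : G.Adj w' u) : Walk.cons hu hv.toWalk = (Walk.cons hv' hu'.toWalk).reverse := by
  subst hw; simp

namespace IsStrongGeodeticSet

variable {V : Type*} {G : SimpleGraph V} {S : Set V}

theorem exists_mid (hG : ∀ u v, G.dist u v ≤ 2) (hS : IsStrongGeodeticSet G S) :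
    ∃ mid : V → V → V, (∀ u ∈ S, ∀ v ∈ S, u ≠ v → ¬G.Adj u v → mid u v = mid v u) ∧
      ∀ x ∉ S, ∃ u ∈ S, ∃ v ∈ S, u ≠ v ∧ G.Adj u x ∧ G.Adj x v ∧ mid u v = x := by
  classical
  obtain ⟨γ, hlen, hrev, hcov⟩ := hS
  refine ⟨fun u v => if h : u ∈ S ∧ v ∈ S then (γ u h.1 v h.2).getVert 1 else u, ?_, ?_⟩
  · intro u hu v hv huv hadj
    have h2 : (γ v hv u hu).length = 2 := by
      have := (γ v hv u hu).reachable.one_lt_dist_of_ne_of_not_adj huv.symm (hadj ·.symm)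
      have := hG v u
      rw [hlen]; omega
    simp only [dif_pos (And.intro hu hv), dif_pos (And.intro hv hu), hrev u hu v hv,
      Walk.getVert_reverse, h2]
  · intro x hx
    obtain ⟨u, hu, v, hv, hxγ⟩ := hcov x
    obtain ⟨i, rfl, hi⟩ := Walk.mem_support_iff_exists_getVert.1 hxγ
    have hi0 : i ≠ 0 := by rintro rfl; exact hx (by rwa [Walk.getVert_zero])
    have hil : i ≠ (γ u hu v hv).length := by
      rintro rfl; exact hx (by rwa [Walk.getVert_length])
    have hl2 : (γ u hu v hv).length ≤ 2 := (hlen u hu v hv).trans_le (hG u v)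
    obtain ⟨rfl, hl⟩ : i = 1 ∧ (γ u hu v hv).length = 2 := by omega
    refine ⟨u, hu, v, hv, ?_, ?_, ?_, dif_pos ⟨hu, hv⟩⟩
    · rintro rfl
      simp [hlen] at hl
    · simpa using (γ u hu v hv).adj_getVert_succ (i := 0) (by omega)
    · simpa [← hl] using (γ u hu v hv).adj_getVert_succ (i := 1) (by omega)

theorem of_mid (mid : V → V → V)
    (hmid : ∀ u ∈ S, ∀ v ∈ S, u ≠ v → ¬G.Adj u v →
      mid u v = mid v u ∧ G.Adj u (mid u v) ∧ G.Adj (mid u v) v)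
    (hcov : ∀ x ∉ S, ∃ u ∈ S, ∃ v ∈ S, u ≠ v ∧ ¬G.Adj u v ∧ mid u v = x) :
    IsStrongGeodeticSet G S := by
  classical
  let γ : ∀ u ∈ S, ∀ v ∈ S, G.Walk u v := fun u hu v hv =>
    if huv : u = v then huv ▸ Walk.nil
    else if hadj : G.Adj u v then hadj.toWalk
    else Walk.cons (hmid u hu v hv huv hadj).2.1 (hmid u hu v hv huv hadj).2.2.toWalk
  refine ⟨γ, fun u hu v hv => ?_, fun u hu v hv => ?_, fun x => ?_⟩
  · by_cases huv : u = v
    · subst huv; simp [γ]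
    by_cases hadj : G.Adj u v
    · simp [γ, huv, hadj, dist_eq_one_iff_adj.2 hadj]
    simp only [γ, dif_neg huv, dif_neg hadj]
    exact le_antisymm ((γ u hu v hv).reachable.one_lt_dist_of_ne_of_not_adj huv hadj) (dist_le _)
  · by_cases huv : u = v
    · subst huv; simp [γ]
    by_cases hadj : G.Adj u v
    · simp [γ, huv, hadj, Ne.symm huv, hadj.symm]
    have hvu : ¬G.Adj v u := fun h => hadj h.symm
    simp only [γ, dif_neg huv, dif_neg hadj, dif_neg (Ne.symm huv), dif_neg hvu]
    exact Walk.cons_toWalk_eq_reverse (hmid u hu v hv huv hadj).1 ..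
  · by_cases hx : x ∈ S
    · exact ⟨x, hx, x, hx, by simp [γ]⟩
    obtain ⟨u, hu, v, hv, huv, hadj, rfl⟩ := hcov x hx
    exact ⟨u, hu, v, hv, by simp [γ, huv, hadj]⟩

end IsStrongGeodeticSet

namespace SimpleGraph

variable {α β : Type*}

theorem completeBipartiteGraph_dist_le_two [Nonempty α] [Nonempty β] (u v : α ⊕ β) :
    (completeBipartiteGraph α β).dist u v ≤ 2 := by
  obtain ⟨a⟩ := ‹Nonempty α›
  obtain ⟨b⟩ := ‹Nonempty β›
  have hl : ∀ a b, (completeBipartiteGraph α β).Adj (inl a) (inr b) := by simp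
  have hr : ∀ a b, (completeBipartiteGraph α β).Adj (inr b) (inl a) := by simp
  rcases u with a₁ | b₁ <;> rcases v with a₂ | b₂
  · exact dist_le (Walk.cons (hl a₁ b) (hr a₂ b).toWalk)
  · exact (dist_le (hl a₁ b₂).toWalk).trans one_le_two
  · exact (dist_le (hr a₂ b₁).toWalk).trans one_le_two
  · exact dist_le (Walk.cons (hr a b₁) (hl a b₂).toWalk)

variable [DecidableEq α] [DecidableEq β] [Nonempty α] [Nonempty β] {S : Finset (α ⊕ β)}

theorem card_compl_toLeft_le_choose_two [Fintype α]
    (hS : IsStrongGeodeticSet (completeBipartiteGraph α β) S) :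
    #S.toLeftᶜ ≤ (#S.toRight).choose 2 := by
  obtain ⟨mid, hsymm, hcov⟩ := hS.exists_mid completeBipartiteGraph_dist_le_two
  rw [← card_map Function.Embedding.inl]
  refine card_le_choose_two_of_subset_image_offDiag (mid := fun b b' => mid (inr b) (inr b'))
    (fun b hb b' hb' hne => hsymm _ (by simpa using hb) _ (by simpa using hb') (by simpa)
      (by simp)) fun x hx => ?_
  obtain ⟨a, ha, rfl⟩ := mem_map.1 hx
  obtain ⟨u, hu, v, hv, huv, hua, hav, hmid⟩ := hcov (inl a) (by simpa using ha)
  obtain ⟨b, rfl⟩ : ∃ b, u = inr b := by cases u <;> simp_all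
  obtain ⟨b', rfl⟩ : ∃ b', v = inr b' := by cases v <;> simp_all
  simp only [mem_image, mem_offDiag, mem_toRight]
  exact ⟨(b, b'), ⟨hu, hv, by simpa using huv⟩, hmid⟩

theorem card_compl_toRight_le_choose_two [Fintype β]
    (hS : IsStrongGeodeticSet (completeBipartiteGraph α β) S) :
    #S.toRightᶜ ≤ (#S.toLeft).choose 2 := by
  obtain ⟨mid, hsymm, hcov⟩ := hS.exists_mid completeBipartiteGraph_dist_le_two
  rw [← card_map Function.Embedding.inr]
  refine card_le_choose_two_of_subset_image_offDiag (mid := fun a a' => mid (inl a) (inl a'))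
    (fun a ha a' ha' hne => hsymm _ (by simpa using ha) _ (by simpa using ha') (by simpa)
      (by simp)) fun x hx => ?_
  obtain ⟨b, hb, rfl⟩ := mem_map.1 hx
  obtain ⟨u, hu, v, hv, huv, hub, hbv, hmid⟩ := hcov (inr b) (by simpa using hb)
  obtain ⟨a, rfl⟩ : ∃ a, u = inl a := by cases u <;> simp_all
  obtain ⟨a', rfl⟩ : ∃ a', v = inl a' := by cases v <;> simp_all
  simp only [mem_image, mem_offDiag, mem_toLeft]
  exact ⟨(a, a'), ⟨hu, hv, by simpa using huv⟩, hmid⟩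

variable [Fintype α] [Fintype β]

theorem isStrongGeodeticSet_disjSum {A : Finset α} {B : Finset β}
    (hA : #Aᶜ ≤ (#B).choose 2) (hB : #Bᶜ ≤ (#A).choose 2) :
    IsStrongGeodeticSet (completeBipartiteGraph α β) (A.disjSum B) := by
  obtain ⟨midX, hsymmX, hX⟩ := exists_subset_image_offDiag_of_card_le_choose_two hA
  obtain ⟨midY, hsymmY, hY⟩ := exists_subset_image_offDiag_of_card_le_choose_two hB
  let mid : α ⊕ β → α ⊕ β → α ⊕ β
    | inl a, inl a' => inr (midY a a')
    | inr b, inr b' => inl (midX b b')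
    | u, _ => u
  refine IsStrongGeodeticSet.of_mid mid ?_ ?_
  · rintro (a | b) - (a' | b') - - hadj <;> simp_all [mid]
  · rintro (a | b) hx
    · obtain ⟨⟨b, b'⟩, hbb', hmid⟩ := mem_image.1 (hX (mem_compl.2 (by simpa using hx)))
      simp only [mem_offDiag] at hbb'
      refine ⟨inr b, ?_, inr b', ?_, ?_, ?_, ?_⟩ <;> simp_all [mid]
    · obtain ⟨⟨a, a'⟩, haa', hmid⟩ := mem_image.1 (hY (mem_compl.2 (by simpa using hx)))
      simp only [mem_offDiag] at haa'
      refine ⟨inl a, ?_, inl a', ?_, ?_, ?_, ?_⟩ <;> simp_all [mid]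

theorem strongGeodeticNumber_completeBipartiteGraph_le {p q : ℕ}
    (hp : p ≤ Fintype.card α) (hq : q ≤ Fintype.card β)
    (hpq : Fintype.card α - p ≤ q.choose 2) (hqp : Fintype.card β - q ≤ p.choose 2) :
    strongGeodeticNumber (completeBipartiteGraph α β) ≤ p + q := by
  obtain ⟨A, -, rfl⟩ := exists_subset_card_eq (s := (univ : Finset α)) (by simpa using hp)
  obtain ⟨B, -, rfl⟩ := exists_subset_card_eq (s := (univ : Finset β)) (by simpa using hq)
  refine Nat.sInf_le ⟨A.disjSum B, card_disjSum .., ?_⟩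
  exact isStrongGeodeticSet_disjSum (by rwa [card_compl]) (by rwa [card_compl])

theorem exists_eq_strongGeodeticNumber_completeBipartiteGraph :
    ∃ p q : ℕ, p ≤ Fintype.card α ∧ Fintype.card α - p ≤ q.choose 2 ∧
      Fintype.card β - q ≤ p.choose 2 ∧
        strongGeodeticNumber (completeBipartiteGraph α β) = p + q := by
  have hne : {k | ∃ S : Finset (α ⊕ β), #S = k ∧
      IsStrongGeodeticSet (completeBipartiteGraph α β) ↑S}.Nonempty :=
    ⟨_, univ.disjSum univ, rfl, isStrongGeodeticSet_disjSum (by simp) (by simp)⟩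
  obtain ⟨S, hS, hSgs⟩ := Nat.sInf_mem hne
  refine ⟨#S.toLeft, #S.toRight, card_le_univ _, ?_, ?_, ?_⟩
  · rw [← card_compl]; exact card_compl_toLeft_le_choose_two hSgs
  · rw [← card_compl]; exact card_compl_toRight_le_choose_two hSgs
  · rw [card_toLeft_add_card_toRight]; exact hS.symm

end SimpleGraph

theorem fFun_le_iff {n k q : ℕ} : fFun n k ≤ q ↔ n - k ≤ q.choose 2 := by
  have hne : {q : ℕ | n - k ≤ q.choose 2}.Nonempty :=
    ⟨n + 1, show n - k ≤ (n + 1).choose 2 by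
      rw [Nat.choose_succ_succ, Nat.choose_one_right]; omega⟩
  exact ⟨fun h => (Nat.sInf_mem hne).trans (Nat.choose_le_choose 2 h), fun h => Nat.sInf_le h⟩

/-- Lemma 2.2: for `3 ≤ n ≤ m`, the strong geodetic number of `K_{n,m}` equals
`min { max {k + f(k), k + g(k)} : 0 ≤ k ≤ n }`. -/
theorem sg_completeBipartite_eq_min (n m : ℕ) (h3 : 3 ≤ n) (hnm : n ≤ m) :
    (strongGeodeticNumber (completeBipartiteGraph (Fin n) (Fin m)) : ℤ) =
      sInf {x : ℤ | ∃ k : ℕ, k ≤ n ∧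
        x = max ((k : ℤ) + (fFun n k : ℤ)) ((k : ℤ) + gFun m k)} := by
  have : Nonempty (Fin n) := ⟨⟨0, by omega⟩⟩
  have : Nonempty (Fin m) := ⟨⟨0, by omega⟩⟩
  have hn_le : n ≤ n.choose 2 := by
    rw [Nat.choose_two_right, Nat.le_div_iff_mul_le two_pos]
    exact Nat.mul_le_mul_left n (by omega)
  apply le_antisymm
  · refine le_csInf ⟨_, 0, Nat.zero_le n, rfl⟩ ?_
    rintro _ ⟨k, hk, rfl⟩
    have hf : fFun n k ≤ m := (fFun_le_iff.2 ((Nat.sub_le n k).trans hn_le)).trans hnm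
    -- `q` is the least size of `B` with `n - k ≤ C(q, 2)` and `m - q ≤ C(k, 2)`
    have hsg := strongGeodeticNumber_completeBipartiteGraph_le
      (α := Fin n) (β := Fin m) (p := k) (q := max (fFun n k) (m - k.choose 2))
      (by simpa using hk) (by simpa using hf)
      (by simpa using fFun_le_iff.1 (le_max_left _ _)) (by simp only [Fintype.card_fin]; omega)
    rw [gFun]
    omega
  · obtain ⟨p, q, hp, hpq, hqp, hsg⟩ :=
      exists_eq_strongGeodeticNumber_completeBipartiteGraph (α := Fin n) (β := Fin m)
    simp only [Fintype.card_fin] at hp hpq hqp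
    have hf := fFun_le_iff.2 hpq
    refine le_trans (csInf_le ⟨0, ?_⟩ ⟨p, hp, rfl⟩) ?_
    · rintro _ ⟨k, -, rfl⟩
      exact (by positivity : (0 : ℤ) ≤ k + fFun n k).trans (le_max_left _ _)
    · rw [hsg, gFun]
      omega
end

section
/- For integers 3 ≤ n ≤ m with m ≥ binom(n,2), the strong geodetic number of the complete bipartite graph K_{n,m} equals m + n - binom(n,2). -/
open SimpleGraph

/-! In `K_{n,m}` every geodesic has length at most two, so a vertex of `Y` outside a strong
geodetic set `S` can only be the middle vertex of the geodesic chosen between two vertices of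
`S ∩ X`, and each pair carries at most one such vertex. Hence `m - |S ∩ Y| ≤ binom(|S ∩ X|, 2)`,
and `|S| ≥ k + m - binom(k, 2) ≥ n + m - binom(n, 2)` with `k = |S ∩ X| ≤ n`, since
`k - binom(k, 2)` is non-increasing for `k ≥ 1` and `binom(n, 2) ≥ n` for `n ≥ 3`.

Conversely, fix an injection of the `binom(n, 2)` pairs of `X` into `Y`, route the geodesic
between the two vertices of each pair through its image, and take `S` to be `X` together with the
`m - binom(n, 2)` vertices of `Y` outside that image. -/

namespace SimpleGraph

variable {V : Type*} {G : SimpleGraph V}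

lemma Walk.eq_getVert_one_of_mem_support {u v x : V} {w : G.Walk u v} (hw : w.length ≤ 2)
    (hx : x ∈ w.support) (hxu : x ≠ u) (hxv : x ≠ v) : w.length = 2 ∧ x = w.getVert 1 := by
  obtain ⟨k, rfl, hk⟩ := Walk.mem_support_iff_exists_getVert.mp hx
  have hk0 : k ≠ 0 := by rintro rfl; exact hxu w.getVert_zero
  have hkl : k ≠ w.length := by rintro rfl; exact hxv w.getVert_length
  obtain rfl : k = 1 := by omega
  exact ⟨by omega, rfl⟩

def IsCommonNeighborFn (G : SimpleGraph V) (c : V → V → V) : Prop :=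
  ∀ u v, u ≠ v → ¬G.Adj u v → G.Adj u (c u v) ∧ G.Adj (c u v) v

namespace IsCommonNeighborFn

variable {c : V → V → V} (hc : G.IsCommonNeighborFn c)

open Classical in
noncomputable def walk (u v : V) : G.Walk u v :=
  if h : u = v then Walk.nil.copy rfl h
  else if ha : G.Adj u v then ha.toWalk
  else Walk.cons (hc u v h ha).1 (Walk.cons (hc u v h ha).2 Walk.nil)

include hc

lemma length_walk (u v : V) : (hc.walk u v).length = G.dist u v := by
  unfold walk
  split_ifs with h ha
  · subst h; simp
  · simp [dist_eq_one_iff_adj.mpr ha]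
  · let w : G.Walk u v := Walk.cons (hc u v h ha).1 (Walk.cons (hc u v h ha).2 Walk.nil)
    have h0 : G.dist u v ≠ 0 := fun h0 => h (w.reachable.dist_eq_zero_iff.mp h0)
    have h1 : G.dist u v ≠ 1 := fun h1 => ha (dist_eq_one_iff_adj.mp h1)
    have h2 : G.dist u v ≤ 2 := dist_le w
    simp only [Walk.length_cons, Walk.length_nil]
    omega

lemma dist_le_two (u v : V) : G.dist u v ≤ 2 := by
  rw [← hc.length_walk]
  unfold walk
  split_ifs <;> simp

lemma reverse_walk (hsymm : ∀ u v, c u v = c v u) (u v : V) :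
    (hc.walk v u).reverse = hc.walk u v := by
  by_cases h : u = v
  · subst h; simp [walk]
  by_cases ha : G.Adj u v
  · simp [walk, h, Ne.symm h, ha, ha.symm]
  have key : ∀ x x' (_ : x = x') (h₁ : G.Adj v x) (h₂ : G.Adj x u) (h₁' : G.Adj u x')
      (h₂' : G.Adj x' v), (Walk.cons h₁ (Walk.cons h₂ Walk.nil)).reverse =
        Walk.cons h₁' (Walk.cons h₂' Walk.nil) := by
    rintro x _ rfl _ _ _ _; rfl
  have ha' : ¬G.Adj v u := fun h' => ha h'.symm
  simp only [walk, dif_neg h, dif_neg (Ne.symm h), dif_neg ha, dif_neg ha']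
  exact key _ _ (hsymm v u) _ _ _ _

theorem isStrongGeodeticSet (hsymm : ∀ u v, c u v = c v u) {S : Set V}
    (hcover : ∀ x ∉ S, ∃ u ∈ S, ∃ v ∈ S, u ≠ v ∧ ¬G.Adj u v ∧ c u v = x) :
    IsStrongGeodeticSet G S := by
  refine ⟨fun u _ v _ => hc.walk u v, fun u _ v _ => hc.length_walk u v,
    fun u _ v _ => (hc.reverse_walk hsymm u v).symm, fun x => ?_⟩
  by_cases hx : x ∈ S
  · exact ⟨x, hx, x, hx, Walk.start_mem_support _⟩
  obtain ⟨u, hu, v, hv, huv, hadj, rfl⟩ := hcover x hx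
  refine ⟨u, hu, v, hv, ?_⟩
  simp [walk, huv, hadj]

end IsCommonNeighborFn

section CompleteBipartite

variable {α β : Type*}

/-- Pairs on different sides are adjacent, so the value chosen for them is irrelevant. -/
def completeBipartiteCommonNeighbor (a₀ : α) (f : Sym2 α → β) : α ⊕ β → α ⊕ β → α ⊕ β
  | .inl a, .inl a' => .inr (f s(a, a'))
  | .inr _, .inr _ => .inl a₀
  | .inl a, .inr _ | .inr _, .inl a => .inl a

lemma completeBipartiteCommonNeighbor_comm (a₀ : α) (f : Sym2 α → β) (u v : α ⊕ β) :
    completeBipartiteCommonNeighbor a₀ f u v = completeBipartiteCommonNeighbor a₀ f v u := by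
  rcases u with a | b <;> rcases v with a' | b' <;>
    simp [completeBipartiteCommonNeighbor, Sym2.eq_swap]

lemma isCommonNeighborFn_completeBipartiteCommonNeighbor (a₀ : α) (f : Sym2 α → β) :
    (completeBipartiteGraph α β).IsCommonNeighborFn (completeBipartiteCommonNeighbor a₀ f) := by
  rintro (a | b) (a' | b') <;> simp [completeBipartiteCommonNeighbor]

end CompleteBipartite

end SimpleGraph

lemma Nat.add_choose_two_le_add_choose_two {a n : ℕ} (ha : a ≤ n) (hn : 3 ≤ n) :
    n + a.choose 2 ≤ a + n.choose 2 := by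
  induction n, hn using Nat.le_induction with
  | base => interval_cases a <;> decide
  | succ k hk ih =>
    rcases ha.lt_or_eq with ha | rfl
    · have := ih (by omega)
      have hstep : (k + 1).choose 2 = k + k.choose 2 := by simp [Nat.choose_succ_succ']
      omega
    · rfl

open Finset

variable {V : Type*} {G : SimpleGraph V}

lemma strongGeodeticNumber_eq [Fintype V] {k : ℕ}
    (hex : ∃ S : Finset V, S.card = k ∧ IsStrongGeodeticSet G ↑S)
    (hle : ∀ S : Finset V, IsStrongGeodeticSet G ↑S → k ≤ S.card) :
    strongGeodeticNumber G = k := by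
  obtain ⟨S, hSk, hS⟩ := hex
  refine le_antisymm (Nat.sInf_le ⟨S, hSk, hS⟩) (le_csInf ⟨k, S, hSk, hS⟩ ?_)
  rintro _ ⟨T, rfl, hT⟩
  exact hle T hT

theorem IsStrongGeodeticSet.card_le_choose_two {S T X : Finset V}
    (hS : IsStrongGeodeticSet G ↑S) (hdist : ∀ u ∈ S, ∀ v ∈ S, G.dist u v ≤ 2)
    (hTS : Disjoint T S) (hX : ∀ x ∈ T, ∀ u ∈ S, G.Adj x u → u ∈ X) :
    #T ≤ (#X).choose 2 := by
  classical
  obtain ⟨γ, hlen, hsym, hcover⟩ := hS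
  have hmid : ∀ x ∈ T, ∃ u v, ∃ (hu : u ∈ S) (hv : v ∈ S),
      (γ u hu v hv).length = 2 ∧ x = (γ u hu v hv).getVert 1 := by
    intro x hx
    obtain ⟨u, hu, v, hv, hxγ⟩ := hcover x
    have hxS : x ∉ S := disjoint_left.mp hTS hx
    exact ⟨u, v, hu, hv, Walk.eq_getVert_one_of_mem_support ((hlen u hu v hv).trans_le
      (hdist u hu v hv)) hxγ (ne_of_mem_of_not_mem hu hxS).symm
      (ne_of_mem_of_not_mem hv hxS).symm⟩
  choose! u v hu hv hlen2 hx using hmid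
  have hcongr : ∀ a b a' b' (ha : a ∈ S) (hb : b ∈ S) (ha' : a' ∈ S) (hb' : b' ∈ S),
      a = a' → b = b' → (γ a ha b hb).getVert 1 = (γ a' ha' b' hb').getVert 1 := by
    rintro a b _ _ _ _ _ _ rfl rfl; rfl
  have hswap : ∀ a b (ha : a ∈ S) (hb : b ∈ S), (γ a ha b hb).length = 2 →
      (γ a ha b hb).getVert 1 = (γ b hb a ha).getVert 1 := by
    intro a b ha hb h2
    rw [hsym b hb a ha, Walk.getVert_reverse, h2]
  have hpair : ∀ x ∈ T, (u x, v x) ∈ X.offDiag := by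
    intro x hxT
    have hlx := hlen2 x hxT
    have hux : G.Adj (u x) x := by
      simpa [← hx x hxT] using (γ _ (hu x hxT) _ (hv x hxT)).adj_getVert_succ (i := 0) (by omega)
    have hxv : G.Adj x (v x) := by
      simpa [← hx x hxT, ← hlx] using
        (γ _ (hu x hxT) _ (hv x hxT)).adj_getVert_succ (i := 1) (by omega)
    refine mem_offDiag.mpr ⟨hX x hxT _ (hu x hxT) hux.symm, hX x hxT _ (hv x hxT) hxv, ?_⟩
    intro huv
    change u x = v x at huv
    have hd := hlen _ (hu x hxT) _ (hv x hxT)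
    rw [hlx, huv, SimpleGraph.dist_self] at hd
    omega
  calc #T ≤ #(X.offDiag.image Sym2.mk.uncurry) := by
        refine card_le_card_of_injOn (fun x => s(u x, v x))
          (fun x hxT => mem_image_of_mem _ (hpair x hxT)) ?_
        intro x hxT x' hxT' hxx'
        rw [hx x hxT, hx x' hxT']
        rcases Sym2.eq_iff.mp hxx' with ⟨h₁, h₂⟩ | ⟨h₁, h₂⟩
        · exact hcongr _ _ _ _ _ _ _ _ h₁ h₂
        · rw [hswap _ _ _ _ (hlen2 x hxT)]
          exact hcongr _ _ _ _ _ _ _ _ h₂ h₁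
    _ = (#X).choose 2 := Sym2.card_image_offDiag X

section CompleteBipartite

variable {α β : Type*} [Fintype α] [Fintype β]

theorem isStrongGeodeticSet_completeBipartiteGraph [DecidableEq α] [DecidableEq β] (a₀ : α)
    (f : Sym2 α → β) :
    IsStrongGeodeticSet (completeBipartiteGraph α β)
      ((univ.disjSum ((univ.offDiag.image Sym2.mk.uncurry).image f)ᶜ : Finset (α ⊕ β)) :
        Set (α ⊕ β)) := by
  refine (isCommonNeighborFn_completeBipartiteCommonNeighbor a₀ f).isStrongGeodeticSet
    (completeBipartiteCommonNeighbor_comm a₀ f) ?_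
  rintro (a | b) hx
  · simp at hx
  obtain ⟨a, a', haa', rfl⟩ : ∃ a a', a ≠ a' ∧ f s(a, a') = b := by simpa using hx
  exact ⟨.inl a, by simp, .inl a', by simp, by simpa using haa', by simp, rfl⟩

theorem exists_isStrongGeodeticSet_completeBipartiteGraph [Nonempty α] [Nonempty β]
    (h : (Fintype.card α).choose 2 ≤ Fintype.card β) :
    ∃ S : Finset (α ⊕ β), #S = Fintype.card α + Fintype.card β - (Fintype.card α).choose 2 ∧
      IsStrongGeodeticSet (completeBipartiteGraph α β) ↑S := by
  classical
  set P : Finset (Sym2 α) := univ.offDiag.image Sym2.mk.uncurry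
  have hP : #P = (Fintype.card α).choose 2 := Sym2.card_image_offDiag univ
  obtain ⟨f, hf⟩ : ∃ f : Sym2 α → β, Set.InjOn f P := by
    refine Set.exists_injOn_iff_injective.mpr ?_
    obtain ⟨e⟩ := Function.Embedding.nonempty_of_card_le (α := (P : Set (Sym2 α))) (β := β)
      (by simpa [hP] using h)
    exact ⟨e, e.injective⟩
  refine ⟨_, ?_, isStrongGeodeticSet_completeBipartiteGraph (Classical.arbitrary α) f⟩
  rw [card_disjSum, card_compl, card_image_of_injOn hf, hP, card_univ]
  omega

theorem IsStrongGeodeticSet.card_add_card_sub_choose_two_le [Nonempty β]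
    (hα : 3 ≤ Fintype.card α) {S : Finset (α ⊕ β)}
    (hS : IsStrongGeodeticSet (completeBipartiteGraph α β) ↑S) :
    Fintype.card α + Fintype.card β - (Fintype.card α).choose 2 ≤ #S := by
  classical
  have : Nonempty α := Fintype.card_pos_iff.mp (by omega)
  have hdist := (isCommonNeighborFn_completeBipartiteCommonNeighbor (Classical.arbitrary α)
    (fun _ => Classical.arbitrary β)).dist_le_two
  have hcount := hS.card_le_choose_two (T := S.toRightᶜ.map .inr) (X := S.toLeft.map .inl)
    (fun u _ v _ => hdist u v) ?_ ?_
  · have hleft : #S.toLeft ≤ Fintype.card α := card_le_univ _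
    have hkey := Nat.add_choose_two_le_add_choose_two hleft hα
    rw [card_map, card_compl, card_map] at hcount
    have := card_toLeft_add_card_toRight (u := S)
    omega
  · rw [Finset.disjoint_left]
    intro x hx
    obtain ⟨b, hb, rfl⟩ := mem_map.mp hx
    simpa using hb
  · intro x hx u hu hxu
    obtain ⟨b, -, rfl⟩ := mem_map.mp hx
    rcases u with a | b'
    · simpa using hu
    · simp at hxu

theorem strongGeodeticNumber_completeBipartiteGraph (hα : 3 ≤ Fintype.card α)
    (h : (Fintype.card α).choose 2 ≤ Fintype.card β) :
    strongGeodeticNumber (completeBipartiteGraph α β) =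
      Fintype.card α + Fintype.card β - (Fintype.card α).choose 2 := by
  have : Nonempty α := Fintype.card_pos_iff.mp (by omega)
  have : Nonempty β := Fintype.card_pos_iff.mp
    ((Nat.choose_pos (by omega : 2 ≤ Fintype.card α)).trans_le h)
  exact strongGeodeticNumber_eq (exists_isStrongGeodeticSet_completeBipartiteGraph h)
    fun _ hS => hS.card_add_card_sub_choose_two_le hα

end CompleteBipartite

theorem sg_completeBipartite_case2_general (n m : ℕ) (h3 : 3 ≤ n) (h : n.choose 2 ≤ m) :
    strongGeodeticNumber (completeBipartiteGraph (Fin n) (Fin m)) = m + n - n.choose 2 := by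
  have := strongGeodeticNumber_completeBipartiteGraph (α := Fin n) (β := Fin m)
    (by simpa using h3) (by simpa using h)
  simpa [add_comm] using this

/-- Theorem 2.4, case 2: if `3 ≤ n ≤ m` and `m ≥ binom(n, 2)`, then
`sg(K_{n,m}) = m + n - binom(n, 2)`. -/
theorem sg_completeBipartite_case2 (n m : ℕ) (h3 : 3 ≤ n) (hnm : n ≤ m)
    (h : n.choose 2 ≤ m) :
    strongGeodeticNumber (completeBipartiteGraph (Fin n) (Fin m)) = m + n - n.choose 2 :=
  sg_completeBipartite_case2_general n m h3 h
end

section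
/- Let n, m be integers with 3 ≤ n ≤ m, n - 3 < binom(m-3,2), and m - 3 ≤ binom(n-3,2). Then there is exactly one real number x ∈ [3, n-3] with f̃(x) = g̃(x), i.e. the real functions f̃ and g̃ intersect exactly once on the interval [3, n-3]. -/
open SimpleGraph

/-- The continuous extension `f̃(x) = (1 + √(1 + 8(n - x)))/2`. -/
noncomputable def ftilde (n : ℕ) (x : ℝ) : ℝ := (1 + Real.sqrt (1 + 8 * ((n : ℝ) - x))) / 2

/-- The continuous extension `g̃(x) = m - x(x-1)/2`. -/
noncomputable def gtilde (m : ℕ) (x : ℝ) : ℝ := (m : ℝ) - x * (x - 1) / 2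

/-!
On `[1, n - 3]` the function `g̃ - f̃` is strictly decreasing: `g̃` drops with slope at least
`1/2` there, while `f̃` drops with slope at most `2/5`, since `√(1 + 8(n - x)) ≥ 5`. The two
binomial hypotheses say exactly that `g̃ - f̃` is positive at `3` and nonpositive at `n - 3`,
so the intermediate value theorem gives the intersection and monotonicity its uniqueness.
-/

open Set

theorem Nat.three_le_of_two_le_choose_two {a : ℕ} (h : 2 ≤ a.choose 2) : 3 ≤ a := by
  by_contra! ha
  interval_cases a <;> simp at h

theorem Nat.cast_sub_three_choose_two {k : ℕ} (hk : 3 ≤ k) :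
    ((k - 3).choose 2 : ℝ) = ((k : ℝ) - 3) * ((k : ℝ) - 4) / 2 := by
  rw [Nat.cast_choose_two, Nat.cast_sub hk]
  ring

theorem continuous_ftilde (n : ℕ) : Continuous (ftilde n) := by
  unfold ftilde
  fun_prop

theorem continuous_gtilde (m : ℕ) : Continuous (gtilde m) := by
  unfold gtilde
  fun_prop

theorem ftilde_sub_three (n : ℕ) : ftilde n (n - 3) = 3 := by
  have h25 : (1 : ℝ) + 8 * (n - (n - 3)) = 5 ^ 2 := by ring
  rw [ftilde, h25, Real.sqrt_sq (by norm_num)]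
  norm_num

theorem ftilde_sub_ftilde_le {n : ℕ} {a b : ℝ} (hab : a ≤ b) (hb : b ≤ n - 3) :
    ftilde n a - ftilde n b ≤ 2 / 5 * (b - a) := by
  set A := 1 + 8 * ((n : ℝ) - a)
  set B := 1 + 8 * ((n : ℝ) - b)
  have hB : 5 ≤ √B := Real.le_sqrt_of_sq_le (by linarith)
  have hBA : √B ≤ √A := Real.sqrt_le_sqrt (by linarith)
  -- `√A - √B = (A - B) / (√A + √B)` and `√A + √B ≥ 10`
  have hdiff : (√A - √B) * (√A + √B) = 8 * (b - a) := by
    linear_combination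
      Real.sq_sqrt (show 0 ≤ A by linarith) - Real.sq_sqrt (show 0 ≤ B by linarith)
  have : (√A - √B) * 10 ≤ 8 * (b - a) := by nlinarith
  simp only [ftilde]
  linarith

theorem strictAntiOn_gtilde_sub_ftilde (n m : ℕ) :
    StrictAntiOn (fun x => gtilde m x - ftilde n x) (Icc 1 ((n : ℝ) - 3)) := by
  rintro a ⟨ha, -⟩ b ⟨-, hb⟩ hab
  have hf := ftilde_sub_ftilde_le hab.le hb
  have hg : gtilde m a - gtilde m b = (b - a) * (a + b - 1) / 2 := by
    simp only [gtilde]; ring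
  dsimp only
  nlinarith

theorem ftilde_lt_gtilde_three {n m : ℕ} (hm : 4 ≤ m)
    (h : 2 * ((n : ℝ) - 3) < ((m : ℝ) - 3) * ((m : ℝ) - 4)) :
    ftilde n 3 < gtilde m 3 := by
  have hm' : (4 : ℝ) ≤ m := by exact_mod_cast hm
  have hsqrt : √(1 + 8 * ((n : ℝ) - 3)) < 2 * m - 7 := by
    rw [Real.sqrt_lt' (by linarith)]
    nlinarith
  simp only [ftilde, gtilde]
  linarith

theorem gtilde_le_ftilde_sub_three {n m : ℕ}
    (h : 2 * ((m : ℝ) - 3) ≤ ((n : ℝ) - 3) * ((n : ℝ) - 4)) :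
    gtilde m (n - 3) ≤ ftilde n (n - 3) := by
  rw [ftilde_sub_three, gtilde]
  linarith

theorem existsUnique_eq_zero_of_strictAntiOn {f : ℝ → ℝ} {a b : ℝ} (hab : a ≤ b)
    (hf : ContinuousOn f (Icc a b)) (hanti : StrictAntiOn f (Icc a b))
    (ha : 0 ≤ f a) (hb : f b ≤ 0) :
    ∃! x, x ∈ Icc a b ∧ f x = 0 := by
  obtain ⟨x, hx, hfx⟩ := intermediate_value_Icc' hab hf ⟨hb, ha⟩
  exact ⟨x, ⟨hx, hfx⟩, fun y ⟨hy, hfy⟩ => hanti.injOn hy hx (hfy.trans hfx.symm)⟩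

theorem ftilde_gtilde_unique_intersection_general (n m : ℕ)
    (h1 : n - 3 < (m - 3).choose 2) (h2 : m - 3 ≤ (n - 3).choose 2) :
    ∃! x : ℝ, x ∈ Set.Icc (3 : ℝ) ((n : ℝ) - 3) ∧ ftilde n x = gtilde m x := by
  have hm : 5 ≤ m := by
    have := Nat.choose_eq_zero_iff.not.mp (by omega : (m - 3).choose 2 ≠ 0)
    omega
  have hn : 6 ≤ n := by
    have := Nat.three_le_of_two_le_choose_two (by omega : 2 ≤ (n - 3).choose 2)
    omega
  have h1' : 2 * ((n : ℝ) - 3) < ((m : ℝ) - 3) * ((m : ℝ) - 4) := by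
    have := (Nat.cast_lt (α := ℝ)).mpr h1
    rw [Nat.cast_sub_three_choose_two (by omega), Nat.cast_sub (by omega)] at this
    push_cast at this
    linarith
  have h2' : 2 * ((m : ℝ) - 3) ≤ ((n : ℝ) - 3) * ((n : ℝ) - 4) := by
    have := (Nat.cast_le (α := ℝ)).mpr h2
    rw [Nat.cast_sub_three_choose_two (by omega), Nat.cast_sub (by omega)] at this
    push_cast at this
    linarith
  have hn' : (6 : ℝ) ≤ n := by exact_mod_cast hn
  have := existsUnique_eq_zero_of_strictAntiOn (f := fun x => gtilde m x - ftilde n x)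
    (by linarith) ((continuous_gtilde m).sub (continuous_ftilde n)).continuousOn
    ((strictAntiOn_gtilde_sub_ftilde n m).mono (Icc_subset_Icc_left (by norm_num)))
    (sub_nonneg.mpr (ftilde_lt_gtilde_three (by omega) h1').le)
    (sub_nonpos.mpr (gtilde_le_ftilde_sub_three h2'))
  simpa only [sub_eq_zero, eq_comm] using this

/-- Lemma 2.7: if `3 ≤ n ≤ m`, `n - 3 < binom(m-3,2)` and `m - 3 ≤ binom(n-3,2)`,
then `f̃` and `g̃` intersect exactly once on `[3, n-3]`. -/
theorem ftilde_gtilde_unique_intersection (n m : ℕ) (h3 : 3 ≤ n) (hnm : n ≤ m)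
    (h1 : n - 3 < (m - 3).choose 2) (h2 : m - 3 ≤ (n - 3).choose 2) :
    ∃! x : ℝ, x ∈ Set.Icc (3 : ℝ) ((n : ℝ) - 3) ∧ ftilde n x = gtilde m x :=
  ftilde_gtilde_unique_intersection_general n m h1 h2
end

section
/- Let n, m be integers with 7 ≤ n ≤ m and m ≤ 3 + binom(n-3,2), and let x* ∈ [3, n-3] be a real number with f̃(x*) = g̃(x*). Then F(⌈x*⌉) ≥ G(⌈x*⌉). -/
open SimpleGraph

/-!
On `[3, n - 3]` the parabola `g̃` falls with slope at most `-5/2`, while `f̃` falls with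
slope at least `-2/5` (its square root stays `≥ 5` there). Hence `g̃ - f̃` is antitone on
`[3, n - 3]`, so it is `≤ 0` at `p = ⌈x*⌉ ≥ x*`, i.e. `g̃(p) ≤ f̃(p)`. Finally `g̃(p) = g(p)`,
and `f̃(p) ≤ f(p)` because `f̃(p)` is the positive root of `q(q-1)/2 = n - p`, which `f(p)`
exceeds by definition.
-/

lemma sub_le_choose_two_fFun (n p : ℕ) : n - p ≤ (fFun n p).choose 2 :=
  Nat.sInf_mem (s := {q : ℕ | n - p ≤ q.choose 2})
    ⟨n - p + 1, by simp only [Set.mem_ofPred_eq, Nat.choose_succ_succ, Nat.choose_one_right]; omega⟩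

lemma one_le_fFun {n p : ℕ} (hp : p < n) : 1 ≤ fFun n p := by
  have h := sub_le_choose_two_fFun n p
  by_contra! h0
  rw [Nat.lt_one_iff.mp h0, Nat.choose_zero_succ] at h
  omega

lemma ftilde_le_of_sub_le {n : ℕ} {x q : ℝ} (hq : 1 ≤ q) (h : (n : ℝ) - x ≤ q * (q - 1) / 2) :
    ftilde n x ≤ q := by
  have : √(1 + 8 * ((n : ℝ) - x)) ≤ 2 * q - 1 :=
    (Real.sqrt_le_left (by linarith)).mpr (by nlinarith)
  unfold ftilde
  linarith

lemma ftilde_le_fFun {n p : ℕ} (hp : p < n) : ftilde n p ≤ fFun n p := by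
  apply ftilde_le_of_sub_le (by exact_mod_cast one_le_fFun hp)
  have h : ((n - p : ℕ) : ℝ) ≤ ((fFun n p).choose 2 : ℕ) := by
    exact_mod_cast sub_le_choose_two_fFun n p
  rwa [Nat.cast_choose_two, Nat.cast_sub hp.le] at h

lemma gFun_cast (m p : ℕ) : (gFun m p : ℝ) = gtilde m p := by
  simp only [gFun, gtilde, Int.cast_sub, Int.cast_natCast, Nat.cast_choose_two]

lemma ftilde_sub_ftilde_le_s9 {n : ℕ} {x y : ℝ} (hxy : x ≤ y) (hy : y ≤ n - 3) :
    ftilde n x - ftilde n y ≤ 2 / 5 * (y - x) := by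
  set s := √(1 + 8 * ((n : ℝ) - x))
  set t := √(1 + 8 * ((n : ℝ) - y))
  have hs2 : s ^ 2 = 1 + 8 * ((n : ℝ) - x) := Real.sq_sqrt (by linarith)
  have ht2 : t ^ 2 = 1 + 8 * ((n : ℝ) - y) := Real.sq_sqrt (by linarith)
  have hs5 : 5 ≤ s := (Real.le_sqrt' (by norm_num)).mpr (by linarith)
  have ht5 : 5 ≤ t := (Real.le_sqrt' (by norm_num)).mpr (by linarith)
  have hts : t ≤ s := Real.sqrt_le_sqrt (by linarith)
  -- `(s - t)(s + t) = 8 (y - x)` with `s + t ≥ 10`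
  have : s - t ≤ 4 / 5 * (y - x) := by
    nlinarith [mul_nonneg (sub_nonneg.2 hts) (by linarith : 0 ≤ s + t - 10)]
  unfold ftilde
  linarith

lemma antitoneOn_gtilde_sub_ftilde (n m : ℕ) :
    AntitoneOn (fun x => gtilde m x - ftilde n x) (Set.Icc 3 ((n : ℝ) - 3)) := by
  intro x hx y hy hxy
  have := ftilde_sub_ftilde_le_s9 hxy hy.2
  simp only [gtilde]
  nlinarith [hx.1, hy.1]

theorem F_ge_G_at_ceil_general (n m : ℕ)
    (x : ℝ) (hx : x ∈ Set.Icc (3 : ℝ) ((n : ℝ) - 3))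
    (hroot : ftilde n x = gtilde m x) :
    (⌈x⌉ : ℤ) + gFun m (⌈x⌉).toNat ≤ (⌈x⌉ : ℤ) + (fFun n (⌈x⌉).toNat : ℤ) := by
  set p := (⌈x⌉).toNat
  have hp_eq : (p : ℤ) = ⌈x⌉ := Int.toNat_of_nonneg (Int.ceil_nonneg (by linarith [hx.1]))
  have hp_real : (p : ℝ) = ⌈x⌉ := by exact_mod_cast hp_eq
  have hxp : x ≤ p := hp_real ▸ Int.le_ceil x
  have hpn : (p : ℝ) ≤ n - 3 := by
    have : ⌈x⌉ ≤ (n : ℤ) - 3 := Int.ceil_le.mpr (by push_cast; exact hx.2)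
    rw [hp_real]
    exact_mod_cast this
  have hp : (p : ℝ) ∈ Set.Icc 3 ((n : ℝ) - 3) := ⟨hx.1.trans hxp, hpn⟩
  have hg_le_f : gtilde m p ≤ ftilde n p := by
    have := antitoneOn_gtilde_sub_ftilde n m hx hp hxp
    simp only [hroot, sub_self] at this
    linarith
  have hf : ftilde n p ≤ fFun n p := ftilde_le_fFun (by exact_mod_cast (by linarith : (p : ℝ) < n))
  have hG_le_F : (gFun m p : ℝ) ≤ (fFun n p : ℤ) := by push_cast; linarith [gFun_cast m p]
  have : gFun m p ≤ fFun n p := by exact_mod_cast hG_le_F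
  omega

/-- Lemma 2.8 (i): if `7 ≤ n ≤ m`, `m ≤ 3 + binom(n-3,2)` and `x* ∈ [3, n-3]` is an
intersection point of `f̃` and `g̃`, then `F(⌈x*⌉) ≥ G(⌈x*⌉)`. -/
theorem F_ge_G_at_ceil (n m : ℕ) (h7 : 7 ≤ n) (hnm : n ≤ m)
    (hm : m ≤ 3 + (n - 3).choose 2)
    (x : ℝ) (hx : x ∈ Set.Icc (3 : ℝ) ((n : ℝ) - 3))
    (hroot : ftilde n x = gtilde m x) :
    (⌈x⌉ : ℤ) + gFun m (⌈x⌉).toNat ≤ (⌈x⌉ : ℤ) + (fFun n (⌈x⌉).toNat : ℤ) :=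
  F_ge_G_at_ceil_general n m x hx hroot
end

section
/- Let n ≥ 2 and let T be a strong geodetic set of the crown graph S_n^0 with bipartition (X,Y), and set T_1 = T ∩ X, T_2 = T ∩ Y, t_1 = |T_1|, t_2 = |T_2|. If |t_1 - t_2| ≥ 2, then there exists a strong geodetic set T' of S_n^0 with |T'| = |T| and | |T' ∩ X| - |T' ∩ Y| | < |t_1 - t_2|. -/
open SimpleGraph

/-- The crown graph `Sₙ⁰`: the complete bipartite graph `K_{n,n}` minus a perfect
matching, i.e. `x i` is adjacent to `y j` iff `i ≠ j`. -/
def crownGraph (n : ℕ) : SimpleGraph (Fin n ⊕ Fin n) :=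
  SimpleGraph.fromRel fun a b => ∃ i j : Fin n, i ≠ j ∧ a = Sum.inl i ∧ b = Sum.inr j

/-!
A left vertex `inl s` outside a strong geodetic set `T` is an interior vertex of the chosen
geodesic between two vertices of `T`. Geodesics of the crown graph have length at most 3, so such
a geodesic has no other interior left vertex, and it joins either two right vertices of `T` or a
matched pair `inl i`, `inr i`. Hence `n - t₁ ≤ C(t₂, 2) + t₂`, symmetrically
`n - t₂ ≤ C(t₁, 2) + t₁`, and so `n ≤ |T| + C(b, 2)` for `b = ⌊|T| / 2⌋ ≥ min t₁ t₂`.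
Conversely, with `a = |T| - b`, the first `a` left and the first `b` right vertices form a strong
geodetic set as soon as `n ≤ a + b + C(b, 2)`, and its imbalance is at most `1`.
For `n = 2` the crown graph is two disjoint edges and has no strong geodetic set at all.
-/

open Finset

namespace SimpleGraph

variable {V W : Type*} {G : SimpleGraph V} {H : SimpleGraph W} {u v : V}

theorem Hom.edist_le (f : G →g H) (u v : V) : H.edist (f u) (f v) ≤ G.edist u v := by
  by_cases hr : G.Reachable u v
  · obtain ⟨p, hp⟩ := hr.exists_walk_length_eq_edist
    rw [← hp, ← p.length_map f]
    exact SimpleGraph.edist_le _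
  · exact edist_eq_top_of_not_reachable hr ▸ le_top

theorem Iso.edist_eq (e : G ≃g H) (u v : V) : H.edist (e u) (e v) = G.edist u v :=
  le_antisymm (e.toHom.edist_le u v) (by simpa using e.symm.toHom.edist_le (e u) (e v))

theorem Iso.dist_eq (e : G ≃g H) (u v : V) : H.dist (e u) (e v) = G.dist u v := by
  simp [dist, e.edist_eq]

theorem Reachable.two_lt_dist_of_commonNeighbors_eq_empty (hr : G.Reachable u v) (hne : u ≠ v)
    (hnadj : ¬G.Adj u v) (hcommon : G.commonNeighbors u v = ∅) : 2 < G.dist u v := by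
  have := two_lt_edist_iff.2 ⟨hne, hnadj, hcommon⟩
  rw [← hr.coe_dist_eq_edist] at this
  exact_mod_cast this

theorem Walk.support_eq_of_length_le_three (w : G.Walk u v) (h : w.length ≤ 3) :
    w.support = [u] ∨ w.support = [u, v] ∨ (∃ m, G.Adj u m ∧ G.Adj m v ∧ w.support = [u, m, v]) ∨
      ∃ m₁ m₂, G.Adj u m₁ ∧ G.Adj m₁ m₂ ∧ G.Adj m₂ v ∧ w.support = [u, m₁, m₂, v] := by
  rcases w with _ | ⟨h₁, _ | ⟨h₂, _ | ⟨h₃, _ | ⟨h₄, w⟩⟩⟩⟩ <;> simp_all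
  omega

theorem Walk.eq_or_adj_of_length_le_three {x y : V} (w : G.Walk u v) (hw : w.length ≤ 3)
    (hx : x ∈ w.support) (hy : y ∈ w.support) (hxu : x ≠ u) (hxv : x ≠ v) (hyu : y ≠ u)
    (hyv : y ≠ v) : x = y ∨ G.Adj x y := by
  rcases w.support_eq_of_length_le_three hw with h | h | ⟨m, -, -, h⟩ | ⟨m₁, m₂, -, h, -, hw⟩ <;>
    simp_all
  grind [G.adj_symm]

end SimpleGraph

namespace IsStrongGeodeticSet

variable {V W : Type*} {G : SimpleGraph V} {H : SimpleGraph W} {S : Set V}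

theorem image (e : G ≃g H) (hS : IsStrongGeodeticSet G S) : IsStrongGeodeticSet H (e '' S) := by
  obtain ⟨γ, hlen, hsym, hcov⟩ := hS
  have mem : ∀ {u}, u ∈ e '' S → e.symm u ∈ S := by
    rintro _ ⟨u, hu, rfl⟩
    simpa using hu
  refine ⟨fun u hu v hv => ((γ _ (mem hu) _ (mem hv)).map e.toHom).copy
    (e.apply_symm_apply u) (e.apply_symm_apply v), fun u hu v hv => ?_, fun u hu v hv => ?_,
    fun x => ?_⟩
  · simp [hlen, ← e.symm.dist_eq]
  · dsimp only
    rw [hsym _ (mem hu), ← Walk.reverse_map, Walk.reverse_copy]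
  · obtain ⟨u, hu, v, hv, hx⟩ := hcov (e.symm x)
    refine ⟨e u, ⟨u, hu, rfl⟩, e v, ⟨v, hv, rfl⟩, ?_⟩
    have hx' : ∀ a (ha : a ∈ S) b (hb : b ∈ S), a = u → b = v →
        e.symm x ∈ (γ a ha b hb).support := by
      rintro a ha b hb rfl rfl
      exact hx
    simp only [Walk.support_copy, Walk.support_map, List.mem_map]
    exact ⟨_, hx' _ _ _ _ (e.symm_apply_apply u) (e.symm_apply_apply v), by simp⟩

theorem of_lt {α : Type*} [LinearOrder α] (key : V → α) (hkey : Function.Injective key)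
    (γ : ∀ u v, key u < key v → G.Walk u v) (hγ : ∀ u v h, (γ u v h).length = G.dist u v)
    (hcov : ∀ x, x ∈ S ∨ ∃ u ∈ S, ∃ v ∈ S, ∃ h : key u < key v, x ∈ (γ u v h).support) :
    IsStrongGeodeticSet G S := by
  let Γ : ∀ u v, G.Walk u v := fun u v =>
    if h : key u < key v then γ u v h
    else if h' : key v < key u then (γ v u h').reverse
    else Walk.nil.copy rfl (hkey (le_antisymm (not_lt.1 h') (not_lt.1 h)))
  refine ⟨fun u _ v _ => Γ u v, fun u _ v _ => ?_, fun u _ v _ => ?_, fun x => ?_⟩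
  · rcases lt_trichotomy (key u) (key v) with h | h | h
    · simp [Γ, h, hγ]
    · obtain rfl := hkey h
      simp [Γ]
    · simp [Γ, h, h.not_gt, hγ, dist_comm]
  · rcases lt_trichotomy (key u) (key v) with h | h | h
    · simp [Γ, h, h.not_gt]
    · obtain rfl := hkey h
      simp [Γ]
    · simp [Γ, h, h.not_gt]
  · rcases hcov x with hx | ⟨u, hu, v, hv, h, hx⟩
    · exact ⟨x, hx, x, hx, by simp [Γ]⟩
    · exact ⟨u, hu, v, hv, by simpa [Γ, h] using hx⟩

end IsStrongGeodeticSet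

theorem Finset.card_filter_isLeft {α β : Type*} (u : Finset (α ⊕ β)) :
    #(u.filter fun x => x.isLeft = true) = #u.toLeft := by
  have : u.filter (fun x => x.isLeft = true) = u.toLeft.map .inl := by
    ext (x | x) <;> simp
  rw [this, card_map]

theorem Finset.card_filter_isRight {α β : Type*} (u : Finset (α ⊕ β)) :
    #(u.filter fun x => x.isRight = true) = #u.toRight := by
  have : u.filter (fun x => x.isRight = true) = u.toRight.map .inr := by
    ext (x | x) <;> simp
  rw [this, card_map]

/-- `C(j, 2) + i` is the colexicographic rank of the pair `i < j`. -/
theorem Nat.exists_eq_choose_two_add {B v : ℕ} (h : v < B.choose 2) :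
    ∃ j < B, ∃ i < j, v = j.choose 2 + i := by
  induction B with
  | zero => simp at h
  | succ B ih =>
    have hB : (B + 1).choose 2 = B.choose 1 + B.choose 2 := Nat.choose_succ_succ' B 1
    rw [hB, Nat.choose_one_right] at h
    by_cases hv : v < B.choose 2
    · obtain ⟨j, hj, i, hi, rfl⟩ := ih hv
      exact ⟨j, by omega, i, hi, rfl⟩
    · exact ⟨B, by omega, v - B.choose 2, by omega, by omega⟩

namespace crownGraph

open Sum

variable {n : ℕ} {i j : Fin n}

@[simp] theorem adj_inl_inr : (crownGraph n).Adj (inl i) (inr j) ↔ i ≠ j := by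
  simp [crownGraph]

@[simp] theorem adj_inr_inl : (crownGraph n).Adj (inr i) (inl j) ↔ j ≠ i := by
  simp [crownGraph]

@[simp] theorem not_adj_inl_inl : ¬(crownGraph n).Adj (inl i) (inl j) := by
  simp [crownGraph]

@[simp] theorem not_adj_inr_inr : ¬(crownGraph n).Adj (inr i) (inr j) := by
  simp [crownGraph]

def swapIso (n : ℕ) : crownGraph n ≃g crownGraph n where
  toEquiv := Equiv.sumComm _ _
  map_rel_iff' := by rintro (a | a) (b | b) <;> simp [ne_comm]

theorem exists_ne_ne (hn : 3 ≤ n) (i j : Fin n) : ∃ m, m ≠ i ∧ m ≠ j := by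
  obtain ⟨m, -, hm⟩ := exists_mem_notMem_of_card_lt_card (s := {i, j}) (t := univ)
    (by simpa using card_le_two.trans_lt hn)
  simp only [mem_insert, mem_singleton, not_or] at hm
  exact ⟨m, hm⟩

/-! ### Geodesics -/

def inlWalk (i j m : Fin n) (hi : m ≠ i) (hj : m ≠ j) : (crownGraph n).Walk (inl i) (inl j) :=
  .cons (adj_inl_inr.2 hi.symm) (.cons (adj_inr_inl.2 hj.symm) .nil)

def inrWalk (i j m : Fin n) (hi : m ≠ i) (hj : m ≠ j) : (crownGraph n).Walk (inr i) (inr j) :=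
  .cons (adj_inr_inl.2 hi) (.cons (adj_inl_inr.2 hj) .nil)

def matchWalk (i p q : Fin n) (hp : p ≠ i) (hq : q ≠ i) (hpq : q ≠ p) :
    (crownGraph n).Walk (inl i) (inr i) :=
  .cons (adj_inl_inr.2 hp.symm) (.cons (adj_inr_inl.2 hpq) (.cons (adj_inl_inr.2 hq) .nil))

@[simp] theorem support_inlWalk (i j m : Fin n) (hi hj) :
    (inlWalk i j m hi hj).support = [inl i, inr m, inl j] := rfl

@[simp] theorem support_inrWalk (i j m : Fin n) (hi hj) :
    (inrWalk i j m hi hj).support = [inr i, inl m, inr j] := rfl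

@[simp] theorem support_matchWalk (i p q : Fin n) (hp hq hpq) :
    (matchWalk i p q hp hq hpq).support = [inl i, inr p, inl q, inr i] := rfl

theorem length_inlWalk (hij : i ≠ j) (m : Fin n) (hi hj) :
    (inlWalk i j m hi hj).length = (crownGraph n).dist (inl i) (inl j) :=
  le_antisymm ((inlWalk i j m hi hj).reachable.one_lt_dist_of_ne_of_not_adj (by simpa) (by simp))
    (dist_le _)

theorem length_inrWalk (hij : i ≠ j) (m : Fin n) (hi hj) :
    (inrWalk i j m hi hj).length = (crownGraph n).dist (inr i) (inr j) :=
  le_antisymm ((inrWalk i j m hi hj).reachable.one_lt_dist_of_ne_of_not_adj (by simpa) (by simp))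
    (dist_le _)

theorem length_matchWalk (i p q : Fin n) (hp hq hpq) :
    (matchWalk i p q hp hq hpq).length = (crownGraph n).dist (inl i) (inr i) := by
  refine le_antisymm ((matchWalk i p q hp hq hpq).reachable.two_lt_dist_of_commonNeighbors_eq_empty
    (by simp) (by simp) ?_) (dist_le _)
  ext (x | x) <;> simp [mem_commonNeighbors]

theorem dist_le_three (hn : 3 ≤ n) (u v : Fin n ⊕ Fin n) : (crownGraph n).dist u v ≤ 3 := by
  wlog hu : u.isLeft generalizing u v
  · have := this (swapIso n u) (swapIso n v) (by cases u <;> simp_all [swapIso])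
    rwa [Iso.dist_eq] at this
  obtain ⟨i, rfl⟩ := isLeft_iff.1 hu
  rcases v with j | j
  · obtain ⟨m, hi, hj⟩ := exists_ne_ne hn i j
    by_cases hij : i = j
    · simp [hij]
    · simp [← length_inlWalk hij m hi hj, inlWalk]
  · by_cases hij : i = j
    · subst hij
      obtain ⟨p, hp, -⟩ := exists_ne_ne hn i i
      obtain ⟨q, hq, hpq⟩ := exists_ne_ne hn i p
      simp [← length_matchWalk i p q hp hq hpq, matchWalk]
    · simp [dist_eq_one_iff_adj.2 (adj_inl_inr.2 hij)]

theorem eq_of_inl_mem_support (hn : 3 ≤ n) {u v : Fin n ⊕ Fin n} (w : (crownGraph n).Walk u v)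
    (hw : w.length = (crownGraph n).dist u v) {s t : Fin n} (hs : inl s ∈ w.support)
    (ht : inl t ∈ w.support) (hsu : inl s ≠ u) (hsv : inl s ≠ v) (htu : inl t ≠ u)
    (htv : inl t ≠ v) : s = t := by
  simpa using w.eq_or_adj_of_length_le_three (hw ▸ dist_le_three hn u v) hs ht hsu hsv htu htv

theorem exists_inr_or_matched_of_inl_mem_support (hn : 3 ≤ n) {u v : Fin n ⊕ Fin n}
    (w : (crownGraph n).Walk u v) (hw : w.length = (crownGraph n).dist u v) {s : Fin n}
    (hs : inl s ∈ w.support) (hsu : inl s ≠ u) (hsv : inl s ≠ v) :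
    (∃ i j, i ≠ j ∧ u = inr i ∧ v = inr j) ∨ ∃ i, s(u, v) = s(inl i, inr i) := by
  have hlen := w.length_support
  rcases w.support_eq_of_length_le_three (hw ▸ dist_le_three hn u v) with
    h | h | ⟨m, hum, hmv, h⟩ | ⟨m₁, m₂, hum, hm, hmv, h⟩ <;>
    simp only [h, List.mem_cons, List.not_mem_nil, or_false, List.length_cons,
      List.length_nil] at hs hlen
  · exact absurd hs hsu
  · exact absurd hs (by tauto)
  · obtain rfl : m = inl s := by tauto
    have huv : u ≠ v := by
      rintro rfl
      simp only [dist_self] at hw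
      omega
    rcases u with i | i <;> rcases v with j | j <;> simp_all
  · have huv : ¬(crownGraph n).Adj u v := by
      rw [← dist_eq_one_iff_adj]
      omega
    obtain rfl | rfl : m₁ = inl s ∨ m₂ = inl s := by tauto
    · rcases u with i | i <;> rcases v with j | j <;> rcases m₂ with k | k <;>
        simp_all [Sym2.eq_swap]
    · rcases u with i | i <;> rcases v with j | j <;> rcases m₁ with k | k <;> simp_all

/-! ### A necessary condition for strong geodetic sets -/

theorem card_compl_toLeft_le (hn : 3 ≤ n) {T : Finset (Fin n ⊕ Fin n)}
    (hT : IsStrongGeodeticSet (crownGraph n) ↑T) :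
    #T.toLeftᶜ ≤ (#T.toRight).choose 2 + #T.toRight := by
  obtain ⟨γ, hlen, hsym, hcov⟩ := hT
  have ne_of_notMem : ∀ {s}, s ∈ T.toLeftᶜ → ∀ {u}, u ∈ T → inl s ≠ u := by
    rintro s hs u hu rfl
    exact mem_compl.1 hs (mem_toLeft.2 hu)
  let pairs := (T.toRight.offDiag.image Sym2.mk.uncurry).image (Sym2.map inr) ∪
    T.toRight.image fun i => s(inl i, inr i)
  calc #T.toLeftᶜ
      ≤ #pairs := card_le_card_of_forall_subsingleton
        (fun s e => ∃ u hu v hv, e = s(u, v) ∧ inl s ∈ (γ u hu v hv).support) ?_ ?_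
    _ ≤ _ := (card_union_le _ _).trans
        (add_le_add (card_image_le.trans (Sym2.card_image_offDiag _).le) card_image_le)
  · intro s hs
    obtain ⟨u, hu, v, hv, hx⟩ := hcov (inl s)
    refine ⟨s(u, v), ?_, u, hu, v, hv, rfl, hx⟩
    rcases exists_inr_or_matched_of_inl_mem_support hn _ (hlen u hu v hv) hx (ne_of_notMem hs hu)
      (ne_of_notMem hs hv) with ⟨i, j, hij, rfl, rfl⟩ | ⟨i, h⟩
    · simp only [pairs, mem_union, mem_image]
      exact Or.inl ⟨s(i, j), ⟨(i, j), by simpa using ⟨hu, hv, hij⟩, rfl⟩, rfl⟩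
    · have : inr i ∈ s(u, v) := h ▸ Sym2.mem_mk_right _ _
      simp only [pairs, mem_union, mem_image, h]
      exact Or.inr ⟨i, by rcases Sym2.mem_iff.1 this with rfl | rfl <;> simpa, rfl⟩
  · rintro e - s₁ ⟨hs₁, u, hu, v, hv, rfl, h₁⟩ s₂ ⟨hs₂, u', hu', v', hv', he, h₂⟩
    have h₂ : inl s₂ ∈ (γ u hu v hv).support := by
      rcases Sym2.eq_iff.1 he with ⟨rfl, rfl⟩ | ⟨rfl, rfl⟩
      · exact h₂
      · rwa [hsym, Walk.support_reverse, List.mem_reverse] at h₂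
    exact eq_of_inl_mem_support hn _ (hlen u hu v hv) h₁ h₂ (ne_of_notMem hs₁ hu)
      (ne_of_notMem hs₁ hv) (ne_of_notMem hs₂ hu) (ne_of_notMem hs₂ hv)

theorem le_card_add_choose_card_toRight (hn : 3 ≤ n) {T : Finset (Fin n ⊕ Fin n)}
    (hT : IsStrongGeodeticSet (crownGraph n) ↑T) : n ≤ #T + (#T.toRight).choose 2 := by
  have h := card_compl_toLeft_le hn hT
  rw [card_compl, Fintype.card_fin] at h
  have := T.card_toLeft_add_card_toRight
  have := card_le_univ T.toLeft
  simp only [Fintype.card_fin] at this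
  omega

theorem le_card_add_choose_card_toLeft (hn : 3 ≤ n) {T : Finset (Fin n ⊕ Fin n)}
    (hT : IsStrongGeodeticSet (crownGraph n) ↑T) : n ≤ #T + (#T.toLeft).choose 2 := by
  have := le_card_add_choose_card_toRight hn (T := T.map (Equiv.sumComm _ _).toEmbedding)
    (by rw [coe_map]; exact hT.image (swapIso n))
  simpa using this

theorem le_card_add_choose_card_div_two (hn : 3 ≤ n) {T : Finset (Fin n ⊕ Fin n)}
    (hT : IsStrongGeodeticSet (crownGraph n) ↑T) : n ≤ #T + (#T / 2).choose 2 := by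
  have hsplit := T.card_toLeft_add_card_toRight
  rcases le_total #T.toLeft #T.toRight with h | h
  · exact (le_card_add_choose_card_toLeft hn hT).trans (by gcongr; omega)
  · exact (le_card_add_choose_card_toRight hn hT).trans (by gcongr; omega)

theorem not_isStrongGeodeticSet_two (S : Set (Fin 2 ⊕ Fin 2)) :
    ¬IsStrongGeodeticSet (crownGraph 2) S := by
  -- `f` is constant on the two components `{inl 0, inr 1}` and `{inl 1, inr 0}`
  let f : Fin 2 ⊕ Fin 2 → Fin 2 := Sum.elim id (· + 1)
  have hadj : ∀ x y, (crownGraph 2).Adj x y → f x = f y := by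
    rintro (i | i) (j | j) h <;> simp only [adj_inl_inr, adj_inr_inl, not_adj_inl_inl,
      not_adj_inr_inr] at h <;> fin_cases i <;> fin_cases j <;> simp_all [f]
  have hf : ∀ {x y} (_ : (crownGraph 2).Walk x y), f x = f y := by
    intro x y w
    induction w with
    | nil => rfl
    | cons h _ ih => exact (hadj _ _ h).trans ih
  rintro ⟨γ, -, -, hcov⟩
  obtain ⟨u, hu, v, hv, h₀⟩ := hcov (inl 0)
  obtain ⟨u', hu', v', hv', h₁⟩ := hcov (inl 1)
  have := (hf ((γ u hu v hv).takeUntil _ h₀)).symm.trans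
    ((hf (γ u hu u' hu')).trans (hf ((γ u' hu' v' hv').takeUntil _ h₁)))
  exact absurd this (by decide)

/-! ### The balanced construction -/

noncomputable def avoid (hn : 3 ≤ n) (i j : Fin n) (t : ℕ) : Fin n :=
  if h : ∃ m : Fin n, m ≠ i ∧ m ≠ j ∧ (m : ℕ) = t then h.choose else (exists_ne_ne hn i j).choose

theorem avoid_ne (hn : 3 ≤ n) (i j : Fin n) (t : ℕ) :
    avoid hn i j t ≠ i ∧ avoid hn i j t ≠ j := by
  unfold avoid
  split_ifs with h
  · exact ⟨h.choose_spec.1, h.choose_spec.2.1⟩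
  · exact (exists_ne_ne hn i j).choose_spec

theorem avoid_eq (hn : 3 ≤ n) {i j m : Fin n} (hi : m ≠ i) (hj : m ≠ j) :
    avoid hn i j m = m := by
  have h : ∃ m' : Fin n, m' ≠ i ∧ m' ≠ j ∧ (m' : ℕ) = m := ⟨m, hi, hj, rfl⟩
  rw [avoid, dif_pos h]
  exact Fin.ext h.choose_spec.2.2

def balancedSet (n a b : ℕ) : Finset (Fin n ⊕ Fin n) :=
  (univ.filter fun i : Fin n => (i : ℕ) < a).disjSum (univ.filter fun j : Fin n => (j : ℕ) < b)

@[simp] theorem inl_mem_balancedSet {a b : ℕ} : inl i ∈ balancedSet n a b ↔ (i : ℕ) < a := by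
  simp [balancedSet]

@[simp] theorem inr_mem_balancedSet {a b : ℕ} : inr j ∈ balancedSet n a b ↔ (j : ℕ) < b := by
  simp [balancedSet]

theorem card_toLeft_balancedSet {a b : ℕ} (ha : a ≤ n) : #(balancedSet n a b).toLeft = a := by
  simp [balancedSet, Fin.card_filter_val_lt, ha]

theorem card_toRight_balancedSet {a b : ℕ} (hb : b ≤ n) : #(balancedSet n a b).toRight = b := by
  simp [balancedSet, Fin.card_filter_val_lt, hb]

section balancedWalk

variable (hn : 3 ≤ n) (a b : ℕ)

/- The chosen geodesics cover the vertices outside `balancedSet n a b` as follows.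
`inl t` with `a ≤ t < a + C(b, 2)` is the midpoint of `inr i, inr j`, where
`t - a = C(j, 2) + i` and `i < j < b`; `inl t` with `a + C(b, 2) ≤ t < a + C(b, 2) + b` and
`inr t` with `b ≤ t < 2b` lie on the geodesic from `inl i` to `inr i`; and `inr t` with `2b ≤ t`
is the midpoint of `inl i, inl j`, where `t - 2b = C(j, 2) + i`. -/

noncomputable def matchRight (i : Fin n) : Fin n := avoid hn i i (b + i)

noncomputable def matchLeft (i : Fin n) : Fin n :=
  avoid hn i (matchRight hn b i) (a + b.choose 2 + i)

theorem matchRight_ne (i : Fin n) : matchRight hn b i ≠ i := (avoid_ne hn i i _).1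

theorem matchLeft_ne (i : Fin n) :
    matchLeft hn a b i ≠ i ∧ matchLeft hn a b i ≠ matchRight hn b i :=
  avoid_ne hn _ _ _

theorem matchRight_eq {i : Fin n} (hb : 0 < b) (h : b + i < n) :
    matchRight hn b i = ⟨b + i, h⟩ :=
  avoid_eq hn (m := ⟨b + i, h⟩) (by simp [Fin.ext_iff]; omega) (by simp [Fin.ext_iff]; omega)

noncomputable def balancedWalk :
    ∀ u v : Fin n ⊕ Fin n, toLex u < toLex v → (crownGraph n).Walk u v
  | inl i, inl j, _ =>
    inlWalk i j _ (avoid_ne hn i j (2 * b + (j : ℕ).choose 2 + i)).1 (avoid_ne hn i j _).2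
  | inr i, inr j, _ =>
    inrWalk i j _ (avoid_ne hn i j (a + (j : ℕ).choose 2 + i)).1 (avoid_ne hn i j _).2
  | inl i, inr j, _ =>
    if h : i = j then
      (matchWalk i _ _ (matchRight_ne hn b i) (matchLeft_ne hn a b i).1
        (matchLeft_ne hn a b i).2).copy rfl (congrArg inr h)
    else (adj_inl_inr.2 h).toWalk
  | inr _, inl _, h => absurd h Lex.not_inr_lt_inl

theorem length_balancedWalk (u v : Fin n ⊕ Fin n) (h : toLex u < toLex v) :
    (balancedWalk hn a b u v h).length = (crownGraph n).dist u v := by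
  rcases u with i | i <;> rcases v with j | j <;> simp only [balancedWalk]
  · exact length_inlWalk (Lex.inl_lt_inl_iff.1 h).ne _ _ _
  · split_ifs with hij
    · subst hij
      rw [Walk.length_copy]
      exact length_matchWalk _ _ _ _ _ _
    · simp [dist_eq_one_iff_adj.2 (adj_inl_inr.2 hij)]
  · exact absurd h Lex.not_inr_lt_inl
  · exact length_inrWalk (Lex.inr_lt_inr_iff.1 h).ne _ _ _

variable {a b}

theorem exists_inl_mem_support (hba : b ≤ a) (hcard : n ≤ a + b + b.choose 2) {t : Fin n}
    (ht : a ≤ t) : ∃ u ∈ balancedSet n a b, ∃ v ∈ balancedSet n a b,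
      ∃ h : toLex u < toLex v, inl t ∈ (balancedWalk hn a b u v h).support := by
  by_cases hpair : (t : ℕ) < a + b.choose 2
  · obtain ⟨j, hj, i, hi, hc⟩ :=
      Nat.exists_eq_choose_two_add (show (t : ℕ) - a < b.choose 2 by omega)
    refine ⟨inr ⟨i, by omega⟩, by simp; omega, inr ⟨j, by omega⟩, by simp; omega,
      Lex.inr_lt_inr_iff.2 hi, ?_⟩
    have hcode : a + j.choose 2 + i = t := by omega
    simp only [balancedWalk, support_inrWalk, hcode]
    rw [avoid_eq hn (by simp [Fin.ext_iff]; omega) (by simp [Fin.ext_iff]; omega)]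
    simp
  · set i : Fin n := ⟨t - a - b.choose 2, by omega⟩
    refine ⟨inl i, by simp [i]; omega, inr i, by simp [i]; omega, Lex.inl_lt_inr _ _, ?_⟩
    have hR : matchRight hn b i = ⟨b + i, by simp [i]; omega⟩ := matchRight_eq hn b (by omega) _
    have hL : matchLeft hn a b i = t := by
      have hcode : a + b.choose 2 + i = t := by simp [i]; omega
      rw [matchLeft, hR, hcode]
      have := Nat.choose_eq_zero_iff (n := b) (k := 2)
      exact avoid_eq hn (by simp [Fin.ext_iff, i]; omega) (by simp [Fin.ext_iff, i]; omega)
    simp [balancedWalk, hL]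

theorem exists_inr_mem_support (hba : b ≤ a) (hab : a ≤ b + 1) (hcard : n ≤ a + b + b.choose 2)
    {t : Fin n} (ht : b ≤ t) : ∃ u ∈ balancedSet n a b, ∃ v ∈ balancedSet n a b,
      ∃ h : toLex u < toLex v, inr t ∈ (balancedWalk hn a b u v h).support := by
  have hb : 0 < b := by
    rcases Nat.eq_zero_or_pos b with rfl | hb
    · simp at hcard
      omega
    · exact hb
  by_cases hmatch : (t : ℕ) < 2 * b
  · set i : Fin n := ⟨t - b, by omega⟩
    refine ⟨inl i, by simp [i]; omega, inr i, by simp [i]; omega, Lex.inl_lt_inr _ _, ?_⟩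
    have hR : matchRight hn b i = t := by
      rw [matchRight_eq hn b hb (by simp [i]; omega)]
      simp [Fin.ext_iff, i]
      omega
    simp [balancedWalk, hR]
  · have hchoose : n ≤ 2 * b + a.choose 2 := by
      rcases (by omega : a = b ∨ a = b + 1) with rfl | rfl
      · omega
      · have : (b + 1).choose 2 = b.choose 1 + b.choose 2 := Nat.choose_succ_succ' b 1
        simp only [Nat.choose_one_right] at this
        omega
    obtain ⟨j, hj, i, hi, hc⟩ :=
      Nat.exists_eq_choose_two_add (show (t : ℕ) - 2 * b < a.choose 2 by omega)
    refine ⟨inl ⟨i, by omega⟩, by simp; omega, inl ⟨j, by omega⟩, by simp; omega,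
      Lex.inl_lt_inl_iff.2 hi, ?_⟩
    have hcode : 2 * b + j.choose 2 + i = t := by omega
    simp only [balancedWalk, support_inlWalk, hcode]
    rw [avoid_eq hn (by simp [Fin.ext_iff]; omega) (by simp [Fin.ext_iff]; omega)]
    simp

end balancedWalk

theorem isStrongGeodeticSet_balancedSet (hn : 3 ≤ n) {a b : ℕ} (hba : b ≤ a) (hab : a ≤ b + 1)
    (hcard : n ≤ a + b + b.choose 2) :
    IsStrongGeodeticSet (crownGraph n) ↑(balancedSet n a b) := by
  refine .of_lt toLex toLex.injective (balancedWalk hn a b) (length_balancedWalk hn a b) ?_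
  rintro (t | t)
  · by_cases ht : (t : ℕ) < a
    · exact .inl (by simpa)
    · exact .inr (by simpa using exists_inl_mem_support hn hba hcard (not_lt.1 ht))
  · by_cases ht : (t : ℕ) < b
    · exact .inl (by simpa)
    · exact .inr (by simpa using exists_inr_mem_support hn hba hab hcard (not_lt.1 ht))

end crownGraph

open crownGraph in
theorem crown_balance_general (n : ℕ) (T : Finset (Fin n ⊕ Fin n))
    (hT : IsStrongGeodeticSet (crownGraph n) ↑T)
    (h2 : 2 ≤ |((T.filter fun a => a.isLeft = true).card : ℤ) -
                ((T.filter fun a => a.isRight = true).card : ℤ)|) :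
    ∃ T' : Finset (Fin n ⊕ Fin n),
      IsStrongGeodeticSet (crownGraph n) ↑T' ∧ T'.card = T.card ∧
      |((T'.filter fun a => a.isLeft = true).card : ℤ) -
        ((T'.filter fun a => a.isRight = true).card : ℤ)| <
      |((T.filter fun a => a.isLeft = true).card : ℤ) -
        ((T.filter fun a => a.isRight = true).card : ℤ)| := by
  simp only [card_filter_isLeft, card_filter_isRight] at h2 ⊢
  have hl : #T.toLeft ≤ n := by simpa using card_le_univ T.toLeft
  have hr : #T.toRight ≤ n := by simpa using card_le_univ T.toRight
  have hsplit := T.card_toLeft_add_card_toRight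
  have hn : 3 ≤ n := by
    obtain rfl | hn := eq_or_ne n 2
    · exact absurd hT (not_isStrongGeodeticSet_two _)
    · have := le_abs.1 h2
      omega
  have hcard := le_card_add_choose_card_div_two hn hT
  set b := #T / 2
  refine ⟨balancedSet n (#T - b) b,
    isStrongGeodeticSet_balancedSet hn (by omega) (by omega) (by omega), ?_, ?_⟩
  · rw [← card_toLeft_add_card_toRight, card_toLeft_balancedSet (by omega),
      card_toRight_balancedSet (by omega)]
    omega
  · rw [card_toLeft_balancedSet (by omega), card_toRight_balancedSet (by omega)]
    have : |((#T - b : ℕ) : ℤ) - b| ≤ 1 := abs_le.2 ⟨by omega, by omega⟩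
    linarith

/-- Lemma 3.1: if `T` is a strong geodetic set of the crown graph `Sₙ⁰` (`n ≥ 2`)
whose part sizes `t₁ = |T ∩ X|`, `t₂ = |T ∩ Y|` satisfy `|t₁ - t₂| ≥ 2`, then there
is a strong geodetic set `T'` of the same cardinality with strictly smaller
imbalance between the two parts. -/
theorem crown_balance (n : ℕ) (hn : 2 ≤ n) (T : Finset (Fin n ⊕ Fin n))
    (hT : IsStrongGeodeticSet (crownGraph n) ↑T)
    (h2 : 2 ≤ |((T.filter fun a => a.isLeft = true).card : ℤ) -
                ((T.filter fun a => a.isRight = true).card : ℤ)|) :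
    ∃ T' : Finset (Fin n ⊕ Fin n),
      IsStrongGeodeticSet (crownGraph n) ↑T' ∧ T'.card = T.card ∧
      |((T'.filter fun a => a.isLeft = true).card : ℤ) -
        ((T'.filter fun a => a.isRight = true).card : ℤ)| <
      |((T.filter fun a => a.isLeft = true).card : ℤ) -
        ((T.filter fun a => a.isRight = true).card : ℤ)| :=
  crown_balance_general n T hT h2
end

section
/- The strong geodetic number of the 3-dimensional hypercube Q_3 equals 4. -/
open SimpleGraph

/-- The hypercube graph `Qₙ` on vertex set `{0,1}ⁿ`; two vertices are adjacent iff
they differ in exactly one coordinate. -/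
def hypercube (n : ℕ) : SimpleGraph (Fin n → Bool) :=
  SimpleGraph.fromRel fun x y => ∃ i, x i ≠ y i ∧ ∀ j, j ≠ i → x j = y j

/-!
A strong geodetic set `S` of a connected graph is the same as a symmetric choice of geodesics
between *all* pairs of vertices whose geodesics between points of `S` cover the graph; in this
form supersets of strong geodetic sets are visibly strong geodetic. If `{a, b, c}` is strong
geodetic, the three geodesics `ab`, `ac`, `bc` cover the graph and each of `a, b, c` lies on two of them,
so the graph has at most `d(a,b) + d(a,c) + d(b,c)` vertices. In `Q₃` distance is Hamming distance, and
each coordinate contributes at most `2` to the sum of the three pairwise Hamming distances, so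
that sum is at most `6 < 8`. Conversely the two antipodal pairs `000, 111` and `011, 100` are
joined by disjoint geodesics covering `Q₃`.
-/

namespace Finset

lemma card_union_union_add_three_le {α : Type*} [DecidableEq α] {A B C : Finset α}
    {a b c : α} (ha : a ∈ A ∩ B) (hb : b ∈ A ∩ C) (hc : c ∈ B ∩ C) (hbc : b ≠ c) :
    #(A ∪ B ∪ C) + 3 ≤ #A + #B + #C := by
  have hAB := card_union_add_card_inter A B
  have hABC := card_union_add_card_inter (A ∪ B) C
  have h₁ : 1 ≤ #(A ∩ B) := card_pos.2 ⟨a, ha⟩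
  have h₂ : 2 ≤ #((A ∪ B) ∩ C) := by
    rw [← card_pair hbc]
    refine card_le_card fun x hx => ?_
    simp only [mem_insert, mem_singleton] at hx
    rcases hx with rfl | rfl <;> simp_all
  omega

end Finset

namespace SimpleGraph

open Finset

variable {V : Type*} {G : SimpleGraph V}

def IsGeodesicSystem (g : ∀ u v : V, G.Walk u v) : Prop :=
  (∀ u v, (g u v).length = G.dist u v) ∧ ∀ u v, g u v = (g v u).reverse

namespace IsGeodesicSystem

variable {g : ∀ u v : V, G.Walk u v}

lemma eq_nil (hg : IsGeodesicSystem g) (u : V) : g u u = .nil :=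
  (Walk.length_eq_zero_iff.1 (by rw [hg.1, dist_self])).eq_nil

lemma mem_support_comm (hg : IsGeodesicSystem g) {u v x : V} :
    x ∈ (g u v).support ↔ x ∈ (g v u).support := by
  rw [hg.2 u v, Walk.support_reverse, List.mem_reverse]

lemma exists_update (hg : IsGeodesicSystem g) {a b : V} (hab : a ≠ b) (w : G.Walk a b)
    (hw : w.length = G.dist a b) :
    ∃ g' : ∀ u v : V, G.Walk u v, IsGeodesicSystem g' ∧ g' a b = w ∧
      ∀ u v, ¬(u = a ∧ v = b) → ¬(u = b ∧ v = a) → g' u v = g u v := by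
  classical
  refine ⟨fun u v => if h : u = a ∧ v = b then w.copy h.1.symm h.2.symm
    else if h : u = b ∧ v = a then w.reverse.copy h.1.symm h.2.symm else g u v,
    ⟨fun u v => ?_, fun u v => ?_⟩, by simp, fun u v h₁ h₂ => by simp [h₁, h₂]⟩
  · dsimp only
    split_ifs with h₁ h₂
    · obtain ⟨rfl, rfl⟩ := h₁; simpa
    · obtain ⟨rfl, rfl⟩ := h₂; simp [hw, dist_comm]
    · exact hg.1 u v
  · by_cases h₁ : u = a ∧ v = b
    · obtain ⟨rfl, rfl⟩ := h₁; simp [hab.symm]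
    by_cases h₂ : u = b ∧ v = a
    · obtain ⟨rfl, rfl⟩ := h₂; simp [hab.symm]
    have h₁' : ¬(v = a ∧ u = b) := fun h => h₂ ⟨h.2, h.1⟩
    have h₂' : ¬(v = b ∧ u = a) := fun h => h₁ ⟨h.2, h.1⟩
    simp only [dif_neg h₁, dif_neg h₂, dif_neg h₁', dif_neg h₂']
    exact hg.2 u v

end IsGeodesicSystem

lemma Connected.exists_isGeodesicSystem (hG : G.Connected) :
    ∃ g : ∀ u v : V, G.Walk u v, IsGeodesicSystem g := by
  choose p hp using hG.exists_walk_length_eq_dist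
  have hnil : ∀ u, p u u = .nil := fun u =>
    (Walk.length_eq_zero_iff.1 (by rw [hp, dist_self])).eq_nil
  -- orient every pair along a well-order, reversing the chosen geodesic against it
  let r : V → V → Prop := WellOrderingRel
  classical
  refine ⟨fun u v => if r v u then (p v u).reverse else p u v, fun u v => ?_, fun u v => ?_⟩
  · dsimp only
    split_ifs <;> simp [hp, dist_comm]
  · rcases trichotomous_of r u v with h | rfl | h
    · simp [h, asymm h]
    · simp [hnil]
    · simp [h, asymm h]

theorem Connected.isStrongGeodeticSet_iff (hG : G.Connected) {S : Set V} :
    IsStrongGeodeticSet G S ↔ ∃ g : ∀ u v : V, G.Walk u v, IsGeodesicSystem g ∧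
      ∀ x, ∃ u ∈ S, ∃ v ∈ S, x ∈ (g u v).support := by
  classical
  constructor
  · rintro ⟨γ, hlen, hrev, hcov⟩
    obtain ⟨g₀, hg₀⟩ := hG.exists_isGeodesicSystem
    refine ⟨fun u v => if h : u ∈ S ∧ v ∈ S then γ u h.1 v h.2 else g₀ u v,
      ⟨fun u v => ?_, fun u v => ?_⟩, fun x => ?_⟩
    · dsimp only
      split_ifs with h
      exacts [hlen .., hg₀.1 u v]
    · by_cases h : u ∈ S ∧ v ∈ S
      · simp only [dif_pos h, dif_pos h.symm]
        exact hrev ..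
      · simp only [dif_neg h, dif_neg (mt And.symm h)]
        exact hg₀.2 u v
    · obtain ⟨u, hu, v, hv, hx⟩ := hcov x
      exact ⟨u, hu, v, hv, by simpa [hu, hv] using hx⟩
  · rintro ⟨g, hg, hcov⟩
    exact ⟨fun u _ v _ => g u v, fun u _ v _ => hg.1 u v, fun u _ v _ => hg.2 u v,
      by simpa using hcov⟩

theorem IsStrongGeodeticSet.mono (hG : G.Connected) {S T : Set V} (hS : IsStrongGeodeticSet G S)
    (hST : S ⊆ T) : IsStrongGeodeticSet G T := by
  obtain ⟨g, hg, hcov⟩ := hG.isStrongGeodeticSet_iff.1 hS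
  refine hG.isStrongGeodeticSet_iff.2 ⟨g, hg, fun x => ?_⟩
  obtain ⟨u, hu, v, hv, hx⟩ := hcov x
  exact ⟨u, hST hu, v, hST hv, hx⟩

lemma Walk.card_support_toFinset_le [DecidableEq V] {u v : V} (w : G.Walk u v) :
    #w.support.toFinset ≤ w.length + 1 :=
  w.length_support ▸ List.toFinset_card_le _

theorem IsStrongGeodeticSet.card_le_dist_add_dist_add_dist [Fintype V] (hG : G.Connected)
    {a b c : V} (hbc : b ≠ c) (h : IsStrongGeodeticSet G {a, b, c}) :
    Fintype.card V ≤ G.dist a b + G.dist a c + G.dist b c := by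
  classical
  obtain ⟨g, hg, hcov⟩ := hG.isStrongGeodeticSet_iff.1 h
  have hcover :
      ∀ x, x ∈ (g a b).support ∨ x ∈ (g a c).support ∨ x ∈ (g b c).support := by
    intro x
    obtain ⟨u, hu, v, hv, hx⟩ := hcov x
    have hx' := hg.mem_support_comm.1 hx
    clear h hcov
    simp only [Set.mem_insert_iff, Set.mem_singleton_iff] at hu hv
    rcases hu with rfl | rfl | rfl <;> rcases hv with rfl | rfl | rfl <;>
      simp_all [hg.eq_nil]
  set A := (g a b).support.toFinset
  set B := (g a c).support.toFinset
  set C := (g b c).support.toFinset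
  have hunion : univ = A ∪ B ∪ C := by
    ext x
    simpa [A, B, C, or_assoc] using hcover x
  have hA : #A ≤ G.dist a b + 1 := hg.1 a b ▸ (g a b).card_support_toFinset_le
  have hB : #B ≤ G.dist a c + 1 := hg.1 a c ▸ (g a c).card_support_toFinset_le
  have hC : #C ≤ G.dist b c + 1 := hg.1 b c ▸ (g b c).card_support_toFinset_le
  have hABC := card_union_union_add_three_le (a := a) (A := A) (B := B) (C := C)
    (by simp [A, B]) (by simp [A, C]) (by simp [B, C]) hbc
  rw [← hunion, card_univ] at hABC
  omega

end SimpleGraph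

section Hamming

variable {ι β : Type*} [Fintype ι] [DecidableEq ι] [DecidableEq β]

lemma hammingDist_update_self (x : ι → β) {i : ι} {b : β} (h : x i ≠ b) :
    hammingDist x (Function.update x i b) = 1 := by
  rw [hammingDist, Finset.card_eq_one]
  refine ⟨i, Finset.eq_singleton_iff_unique_mem.2 ⟨by simpa using h, fun j hj => ?_⟩⟩
  by_contra hji
  simp [Function.update_of_ne hji] at hj

lemma hammingDist_update_add_one (x y : ι → β) {i : ι} (h : x i ≠ y i) :
    hammingDist (Function.update x i (y i)) y + 1 = hammingDist x y := by
  have hset : ({j | Function.update x i (y i) j ≠ y j} : Finset ι) =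
      ({j | x j ≠ y j} : Finset ι).erase i := by
    ext j
    by_cases hji : j = i <;> simp [hji]
  rw [hammingDist, hammingDist, hset, Finset.card_erase_add_one (by simpa using h)]

end Hamming

lemma hammingDist_add_hammingDist_add_hammingDist_le {ι : Type*} [Fintype ι]
    (x y z : ι → Bool) :
    hammingDist x y + hammingDist x z + hammingDist y z ≤ 2 * Fintype.card ι := by
  simp only [hammingDist, Finset.card_filter, ← Finset.sum_add_distrib]
  calc _ ≤ ∑ _ : ι, 2 := Finset.sum_le_sum fun i _ => by
          cases x i <;> cases y i <;> cases z i <;> decide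
    _ = 2 * Fintype.card ι := by simp [mul_comm]

section Hypercube

variable {n : ℕ}

lemma hypercube_adj_iff {x y : Fin n → Bool} : (hypercube n).Adj x y ↔ hammingDist x y = 1 := by
  rw [hypercube, SimpleGraph.fromRel_adj, hammingDist, Finset.card_eq_one]
  simp only [Finset.eq_singleton_iff_unique_mem, Finset.mem_filter, Finset.mem_univ, true_and]
  constructor
  · rintro ⟨-, ⟨i, hi, hj⟩ | ⟨i, hi, hj⟩⟩
    · exact ⟨i, hi, fun j hne => by_contra fun hji => hne (hj j hji)⟩
    · exact ⟨i, Ne.symm hi, fun j hne => by_contra fun hji => hne (hj j hji).symm⟩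
  · rintro ⟨i, hi, hj⟩
    exact ⟨fun h => hi (h ▸ rfl),
      Or.inl ⟨i, hi, fun j hji => by_contra fun hne => hji (hj j hne)⟩⟩

lemma hammingDist_le_length {x y : Fin n → Bool} (w : (hypercube n).Walk x y) :
    hammingDist x y ≤ w.length := by
  induction w with
  | nil => simp
  | cons h w ih =>
    rw [SimpleGraph.Walk.length_cons, add_comm, ← hypercube_adj_iff.1 h]
    exact (hammingDist_triangle _ _ _).trans (Nat.add_le_add_left ih _)

lemma exists_walk_length_eq_hammingDist (x y : Fin n → Bool) :
    ∃ w : (hypercube n).Walk x y, w.length = hammingDist x y := by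
  induction hxy : hammingDist x y generalizing x with
  | zero =>
    obtain rfl := hammingDist_eq_zero.1 hxy
    exact ⟨.nil, rfl⟩
  | succ d ih =>
    obtain ⟨i, hi⟩ : ∃ i, x i ≠ y i := Function.ne_iff.1 (hammingDist_pos.1 (by omega))
    obtain ⟨w, hw⟩ := ih (Function.update x i (y i)) (by
      have := hammingDist_update_add_one x y hi; omega)
    exact ⟨.cons (hypercube_adj_iff.2 (hammingDist_update_self x hi)) w, by simp [hw]⟩

lemma hypercube_dist (x y : Fin n → Bool) : (hypercube n).dist x y = hammingDist x y := by
  obtain ⟨w, hw⟩ := exists_walk_length_eq_hammingDist x y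
  obtain ⟨p, hp⟩ := w.reachable.exists_walk_length_eq_dist
  exact le_antisymm (hw ▸ SimpleGraph.dist_le w) (hp ▸ hammingDist_le_length p)

lemma hypercube_connected : (hypercube n).Connected :=
  (SimpleGraph.connected_iff_exists_forall_reachable _).2 ⟨fun _ => false,
    fun y => (exists_walk_length_eq_hammingDist _ y).elim fun w _ => w.reachable⟩

end Hypercube

theorem hypercube_three_not_isStrongGeodeticSet {S : Finset (Fin 3 → Bool)} (hS : S.card ≤ 3) :
    ¬IsStrongGeodeticSet (hypercube 3) S := by
  intro h
  obtain ⟨T, hST, hT⟩ := Finset.exists_superset_card_eq hS (by simp)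
  obtain ⟨a, b, c, -, -, hbc, rfl⟩ := Finset.card_eq_three.1 hT
  have hT : IsStrongGeodeticSet (hypercube 3) {a, b, c} := by
    simpa using h.mono hypercube_connected (Finset.coe_subset.2 hST)
  have : 8 ≤ 2 * 3 := calc
    8 = Fintype.card (Fin 3 → Bool) := by simp
    _ ≤ _ := hT.card_le_dist_add_dist_add_dist hypercube_connected hbc
    _ = hammingDist a b + hammingDist a c + hammingDist b c := by simp only [hypercube_dist]
    _ ≤ 2 * 3 := by simpa using hammingDist_add_hammingDist_add_hammingDist_le a b c
  omega

theorem hypercube_three_isStrongGeodeticSet :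
    IsStrongGeodeticSet (hypercube 3) ({![false, false, false], ![true, true, true],
      ![false, true, true], ![true, false, false]} : Finset (Fin 3 → Bool)) := by
  let w₁ : (hypercube 3).Walk ![false, false, false] ![true, true, true] :=
    .cons (v := ![false, false, true]) (hypercube_adj_iff.2 (by decide)) <|
    .cons (v := ![true, false, true]) (hypercube_adj_iff.2 (by decide)) <|
    .cons (hypercube_adj_iff.2 (by decide)) .nil
  let w₂ : (hypercube 3).Walk ![false, true, true] ![true, false, false] :=
    .cons (v := ![false, true, false]) (hypercube_adj_iff.2 (by decide)) <|
    .cons (v := ![true, true, false]) (hypercube_adj_iff.2 (by decide)) <|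
    .cons (hypercube_adj_iff.2 (by decide)) .nil
  have hcover : ∀ x, x ∈ w₁.support ∨ x ∈ w₂.support := by decide
  obtain ⟨g₀, hg₀⟩ := hypercube_connected.exists_isGeodesicSystem
  obtain ⟨g₁, hg₁, hg₁w, -⟩ := hg₀.exists_update (by decide) w₁
    (by rw [hypercube_dist]; decide)
  obtain ⟨g₂, hg₂, hg₂w, hg₂g₁⟩ := hg₁.exists_update (by decide) w₂
    (by rw [hypercube_dist]; decide)
  refine hypercube_connected.isStrongGeodeticSet_iff.2 ⟨g₂, hg₂, fun x => ?_⟩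
  rcases hcover x with hx | hx
  · refine ⟨![false, false, false], by simp, ![true, true, true], by simp, ?_⟩
    rwa [hg₂g₁ _ _ (by decide) (by decide), hg₁w]
  · exact ⟨![false, true, true], by simp, ![true, false, false], by simp, hg₂w ▸ hx⟩

/-- The strong geodetic number of the 3-dimensional hypercube `Q₃` equals 4. -/
theorem sg_hypercube_three : strongGeodeticNumber (hypercube 3) = 4 := by
  have h4 : 4 ∈ {k | ∃ S : Finset (Fin 3 → Bool), S.card = k ∧
      IsStrongGeodeticSet (hypercube 3) ↑S} :=
    ⟨_, by decide, hypercube_three_isStrongGeodeticSet⟩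
  refine le_antisymm (Nat.sInf_le h4) (le_csInf ⟨4, h4⟩ ?_)
  rintro k ⟨S, rfl, hS⟩
  by_contra! hk
  exact hypercube_three_not_isStrongGeodeticSet (by omega) hS
end

section
/- For every integer n ≥ 1, the strong geodetic number of the hypercube Q_n satisfies sg(Q_n) ≤ (3/2)·2^(n/2) if n is even, and sg(Q_n) ≤ 2^((n+1)/2) if n is odd. -/
open SimpleGraph

/-!
Write `n = p + q + p` and take the vertices `(b, s, b)`, with `b ∈ {0,1}^p` and `s` in a set
`M ⊆ {0,1}^q` of middle patterns. Between two vertices, fix the geodesic that flips the differing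
coordinates from left to right, oriented by a linear order refining the pointwise order of the
middle patterns. Then `(l, m, r)` lies on the geodesic from `(r, s, r)` to `(l, s', l)` whenever
`s < s'` and `m` is a prefix of `s'` followed by the complementary suffix of `s`. The patterns
`M = {0, 1}` (for `q = 1`) and `M = {00, 01, 11}` (for `q = 2`) produce every middle word this way,
giving strong geodetic sets of sizes `2^(p+1)` and `3 · 2^p`.
-/

open Finset Function

section StrongGeodetic

variable {V : Type*} {G : SimpleGraph V}

theorem strongGeodeticNumber_le_card [Fintype V] {S : Finset V}
    (hS : IsStrongGeodeticSet G S) : strongGeodeticNumber G ≤ #S :=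
  Nat.sInf_le ⟨S, rfl, hS⟩

theorem isStrongGeodeticSet_of_geodesics {α : Type*} [LinearOrder α]
    (P : ∀ u v, G.Walk u v) (hP : ∀ u v, (P u v).length = G.dist u v)
    (f : V → α) (hf : Injective f) {S : Set V}
    (hS : ∀ c, ∃ x ∈ S, ∃ y ∈ S, f x < f y ∧ c ∈ (P x y).support) :
    IsStrongGeodeticSet G S := by
  refine ⟨fun u _ v _ => if f u ≤ f v then P u v else (P v u).reverse, ?_, ?_, ?_⟩
  · intro u _ v _
    dsimp only
    split_ifs
    · exact hP u v
    · rw [Walk.length_reverse, hP, dist_comm]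
  · intro u _ v _
    rcases lt_trichotomy (f u) (f v) with h | h | h
    · simp [h.le, h.not_ge]
    · obtain rfl := hf h
      have hnil : P u u = .nil := by
        rw [Walk.eq_nil_iff_nil, ← Walk.length_eq_zero_iff, hP, dist_self]
      simp [hnil]
    · simp [h.le, h.not_ge]
  · intro c
    obtain ⟨x, hx, y, hy, hxy, hc⟩ := hS c
    exact ⟨x, hx, y, hy, by simpa [hxy.le] using hc⟩

end StrongGeodetic

namespace Hypercube

section Mix

variable {n : ℕ}

theorem hammingDist_le_one_of_adj {x y : Fin n → Bool} (h : (hypercube n).Adj x y) :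
    hammingDist x y ≤ 1 := by
  rw [hypercube, SimpleGraph.fromRel_adj] at h
  obtain ⟨i, hi⟩ : ∃ i, ∀ j, j ≠ i → x j = y j := by
    rcases h.2 with ⟨i, -, hi⟩ | ⟨i, -, hi⟩
    · exact ⟨i, hi⟩
    · exact ⟨i, fun j hj => (hi j hj).symm⟩
  refine card_le_one.2 fun a ha b hb => ?_
  simp only [mem_filter, mem_univ, true_and] at ha hb
  rw [not_imp_comm.1 (hi a) ha, not_imp_comm.1 (hi b) hb]

theorem adj_update {x : Fin n → Bool} {i : Fin n} {b : Bool} (h : x i ≠ b) :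
    (hypercube n).Adj x (update x i b) := by
  rw [hypercube, SimpleGraph.fromRel_adj]
  refine ⟨fun hx => h ?_, .inl ⟨i, by simpa using h, fun j hj => (update_of_ne hj _ _).symm⟩⟩
  simpa using congrFun hx i

theorem hammingDist_le_length {x y : Fin n → Bool} (w : (hypercube n).Walk x y) :
    hammingDist x y ≤ w.length := by
  induction w with
  | nil => simp
  | cons h w ih =>
    grw [hammingDist_triangle, hammingDist_le_one_of_adj h, ih, Walk.length_cons,
      add_comm]

/-- For `j = 0, …, n` these are the vertices of the geodesic from `x` to `y` that flips the
differing coordinates in increasing order. -/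
def mix (x y : Fin n → Bool) (j : ℕ) : Fin n → Bool := fun i => if (i : ℕ) < j then y i else x i

theorem mix_zero (x y : Fin n → Bool) : mix x y 0 = x := by
  funext i
  simp [mix]

theorem mix_of_le {j : ℕ} (x y : Fin n → Bool) (hj : n ≤ j) : mix x y j = y := by
  funext i
  simp [mix, i.isLt.trans_le hj]

theorem mix_succ {j : ℕ} (x y : Fin n → Bool) (hj : j < n) :
    mix x y (j + 1) = update (mix x y j) ⟨j, hj⟩ (y ⟨j, hj⟩) := by
  funext i
  rcases eq_or_ne i ⟨j, hj⟩ with rfl | hi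
  · simp [mix]
  · have : (i : ℕ) ≠ j := fun h => hi (Fin.ext h)
    simp only [mix, update_of_ne hi]
    congr 1
    simp only [eq_iff_iff]
    omega

theorem hammingDist_mix (x y : Fin n → Bool) (j : ℕ) :
    hammingDist x (mix x y j) = #{i : Fin n | (i : ℕ) < j ∧ x i ≠ y i} := by
  unfold hammingDist mix
  congr 1
  ext i
  by_cases hi : (i : ℕ) < j <;> simp [hi]

theorem mix_succ_eq_or_adj (x y : Fin n → Bool) (j : ℕ) :
    mix x y (j + 1) = mix x y j ∨
      (hypercube n).Adj (mix x y j) (mix x y (j + 1)) ∧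
        hammingDist x (mix x y j) < hammingDist x (mix x y (j + 1)) := by
  rcases lt_or_ge j n with hj | hj
  · set k : Fin n := ⟨j, hj⟩
    have hk : mix x y j k = x k := by simp [mix, k]
    by_cases hxy : x k = y k
    · left
      rw [mix_succ x y hj, update_eq_self_iff, hk, hxy]
    · right
      refine ⟨mix_succ x y hj ▸ adj_update (hk ▸ hxy), ?_⟩
      simp only [hammingDist_mix]
      refine card_lt_card <| (ssubset_iff_of_subset ?_).2 ⟨k, ?_, ?_⟩
      · exact monotone_filter_right _ fun i _ h => ⟨by omega, h.2⟩
      · simpa [k] using hxy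
      · simp [k]
  · left
    rw [mix_of_le x y hj, mix_of_le x y (by omega)]

theorem exists_walk_to_mix (x y : Fin n → Bool) (j : ℕ) :
    ∃ w : (hypercube n).Walk x (mix x y j),
      w.length ≤ hammingDist x (mix x y j) ∧ ∀ k ≤ j, mix x y k ∈ w.support := by
  induction j with
  | zero =>
    refine ⟨Walk.nil.copy rfl (mix_zero x y).symm, by simp, fun k hk => ?_⟩
    simp [Nat.le_zero.1 hk, mix_zero]
  | succ j ih =>
    obtain ⟨w, hlen, hsupp⟩ := ih
    rcases mix_succ_eq_or_adj x y j with heq | ⟨hadj, hlt⟩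
    · refine ⟨w.copy rfl heq.symm, by simpa [heq] using hlen, fun k hk => ?_⟩
      rcases Nat.le_succ_iff.1 hk with hk | rfl
      · simpa using hsupp k hk
      · simp [heq]
    · refine ⟨w.concat hadj, by simp; omega, fun k hk => ?_⟩
      simp only [Walk.support_concat, List.mem_append, List.mem_singleton]
      rcases Nat.le_succ_iff.1 hk with hk | rfl
      · exact .inl (hsupp k hk)
      · exact .inr rfl

theorem exists_walk_through_mix (x y : Fin n → Bool) :
    ∃ w : (hypercube n).Walk x y, w.length ≤ hammingDist x y ∧ ∀ j, mix x y j ∈ w.support := by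
  obtain ⟨w, hlen, hsupp⟩ := exists_walk_to_mix x y n
  have hy := mix_of_le x y le_rfl
  refine ⟨w.copy rfl hy, (w.length_copy _ _).trans_le (hlen.trans_eq (by rw [hy])), fun j => ?_⟩
  rcases le_total j n with hj | hj
  · simpa using hsupp j hj
  · rw [mix_of_le x y hj]
    exact (w.copy rfl hy).end_mem_support

theorem dist_eq_hammingDist (x y : Fin n → Bool) : (hypercube n).dist x y = hammingDist x y := by
  obtain ⟨w, hlen, -⟩ := exists_walk_through_mix x y
  obtain ⟨w', hw'⟩ := Reachable.exists_walk_length_eq_dist ⟨w⟩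
  exact le_antisymm ((dist_le w).trans hlen) (hw' ▸ hammingDist_le_length w')

theorem exists_geodesic_through_mix (x y : Fin n → Bool) :
    ∃ w : (hypercube n).Walk x y,
      w.length = (hypercube n).dist x y ∧ ∀ j, mix x y j ∈ w.support := by
  obtain ⟨w, hlen, hsupp⟩ := exists_walk_through_mix x y
  exact ⟨w, le_antisymm (dist_eq_hammingDist x y ▸ hlen) (dist_le w), hsupp⟩

end Mix

section Flank

variable {p q : ℕ}

def flank (b : Fin p → Bool) (s : Fin q → Bool) : Fin (p + q + p) → Bool :=
  Fin.append (Fin.append b s) b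

def middle (z : Fin (p + q + p) → Bool) : Fin q → Bool :=
  fun i => z (Fin.castAdd p (Fin.natAdd p i))

@[simp]
theorem middle_flank (b : Fin p → Bool) (s : Fin q → Bool) : middle (flank b s) = s := by
  funext i
  simp [middle, flank]

theorem eq_append_append (c : Fin (p + q + p) → Bool) :
    ∃ (l : Fin p → Bool) (m : Fin q → Bool) (r : Fin p → Bool), c = Fin.append (Fin.append l m) r :=
  ⟨_, _, _, by rw [Fin.append_castAdd_natAdd, Fin.append_castAdd_natAdd]⟩

theorem mix_flank (b b' : Fin p → Bool) (s s' : Fin q → Bool) {t : ℕ} (ht : t ≤ q) :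
    mix (flank b s) (flank b' s') (p + t) = Fin.append (Fin.append b' (mix s s' t)) b := by
  funext i
  refine Fin.addCases (fun i => Fin.addCases (fun i => ?_) (fun i => ?_) i) (fun i => ?_) i <;>
    simp [mix, flank] <;> omega

end Flank

theorem strongGeodeticNumber_le_two_pow_mul_card (p q : ℕ) (M : Finset (Fin q → Bool))
    (hM : ∀ m, ∃ s ∈ M, ∃ s' ∈ M, s < s' ∧ ∃ t ≤ q, m = mix s s' t) :
    strongGeodeticNumber (hypercube (p + q + p)) ≤ 2 ^ p * #M := by
  choose P hP hPmix using exists_geodesic_through_mix (n := p + q + p)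
  set S : Finset (Fin (p + q + p) → Bool) := (univ ×ˢ M).image fun bs => flank bs.1 bs.2
  have hS : IsStrongGeodeticSet (hypercube (p + q + p)) ↑S := by
    refine isStrongGeodeticSet_of_geodesics P hP (fun z => toLex (toLex (middle z), toLex z))
      (fun z z' h => by simpa using congrArg (fun w => (ofLex w).2) h) fun c => ?_
    obtain ⟨l, m, r, rfl⟩ := eq_append_append c
    obtain ⟨s, hs, s', hs', hlt, t, ht, rfl⟩ := hM m
    refine ⟨flank r s, ?_, flank l s', ?_, ?_, ?_⟩
    · simpa [S] using ⟨r, s, hs, rfl⟩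
    · simpa [S] using ⟨l, s', hs', rfl⟩
    · simpa [Prod.Lex.toLex_lt_toLex] using .inl (Pi.toLex_strictMono hlt)
    · simpa [mix_flank r l s s' ht] using hPmix (flank r s) (flank l s') (p + t)
  calc strongGeodeticNumber (hypercube (p + q + p)) ≤ #S := strongGeodeticNumber_le_card hS
    _ ≤ #(univ ×ˢ M) := card_image_le
    _ = 2 ^ p * #M := by simp

theorem strongGeodeticNumber_le_of_odd (p : ℕ) :
    strongGeodeticNumber (hypercube (p + 1 + p)) ≤ 2 ^ (p + 1) := by
  refine (strongGeodeticNumber_le_two_pow_mul_card p 1 {![false], ![true]} ?_).trans_eq (by simp [pow_succ])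
  simp only [Pi.lt_def, Pi.le_def]
  decide

theorem strongGeodeticNumber_le_of_even (p : ℕ) :
    strongGeodeticNumber (hypercube (p + 2 + p)) ≤ 3 * 2 ^ p := by
  refine (strongGeodeticNumber_le_two_pow_mul_card p 2 {![false, false], ![false, true], ![true, true]} ?_).trans_eq
    (by simp [mul_comm])
  simp only [Pi.lt_def, Pi.le_def]
  decide

end Hypercube

/-- Theorem 4.2: for `n ≥ 1`, `sg(Qₙ) ≤ (3/2)·2^(n/2)` if `n` is even and
`sg(Qₙ) ≤ 2^((n+1)/2)` if `n` is odd. -/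
theorem sg_hypercube_upper (n : ℕ) (hn : 1 ≤ n) :
    (Even n → (strongGeodeticNumber (hypercube n) : ℝ) ≤
      3 / 2 * (2 : ℝ) ^ ((n : ℝ) / 2)) ∧
    (Odd n → (strongGeodeticNumber (hypercube n) : ℝ) ≤
      (2 : ℝ) ^ (((n : ℝ) + 1) / 2)) := by
  constructor
  · rintro ⟨m, rfl⟩
    obtain ⟨p, rfl⟩ : ∃ p, m = p + 1 := ⟨m - 1, by omega⟩
    have hexp : ((p + 2 + p : ℕ) : ℝ) / 2 = (p + 1 : ℕ) := by push_cast; ring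
    rw [show p + 1 + (p + 1) = p + 2 + p by ring, hexp, Real.rpow_natCast]
    calc (strongGeodeticNumber (hypercube (p + 2 + p)) : ℝ) ≤ (3 * 2 ^ p : ℕ) :=
          Nat.cast_le.2 (Hypercube.strongGeodeticNumber_le_of_even p)
      _ = 3 / 2 * 2 ^ (p + 1) := by push_cast; ring
  · rintro ⟨p, rfl⟩
    have hexp : (((2 * p + 1 : ℕ) : ℝ) + 1) / 2 = (p + 1 : ℕ) := by push_cast; ring
    rw [hexp, Real.rpow_natCast, show 2 * p + 1 = p + 1 + p by ring]
    exact_mod_cast Hypercube.strongGeodeticNumber_le_of_odd p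
end
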